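/- arXiv:1601.03546 — 14 statements merged into one kernel-verified Lean document; each statement's English description precedes it below -/
import Mathlib

section
/- Let A be a unital C*-algebra and a ∈ A. Then a is generalized invertible (there exists b with aba = a) if and only if a is Moore-Penrose invertible (there exists b with aba = a, bab = b, and ab, ba self-adjoint). -/
/-!
If `a * b * a = a`, then `p = b * a` is an idempotent with `a * p = a`. Kaplansky's formula
`s = p⋆ p (1 - (p - p⋆)²)⁻¹` turns `p` into a star projection with `p s = p` and `s p = s`; the
inverse exists because `1 - (p - p⋆)² = 1 + c⋆ c` for `c = p - p⋆`. Then `a s = a` and `s = t a`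
for some `t`, so `s = s⋆ s = a⋆ (t⋆ t) a ≤ ‖t‖² a⋆ a`. This bounds `d = a⋆ a + (1 - s)` below by a
positive scalar, so `d` is invertible, and `d⁻¹ a⋆` is a Moore–Penrose inverse of `a`: it satisfies
`d⁻¹ a⋆ a = s`, and `s` commutes with `d`.
-/

structure IsMoorePenroseInverse {R : Type*} [Mul R] [Star R] (a b : R) : Prop where
  penrose₁ : a * b * a = a
  penrose₂ : b * a * b = b
  penrose₃ : IsSelfAdjoint (a * b)
  penrose₄ : IsSelfAdjoint (b * a)

section Ring

variable {R : Type*} [Ring R] {p q : R}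

theorem IsIdempotentElem.mul_one_sub_sub_sq (hp : IsIdempotentElem p) (hq : IsIdempotentElem q) :
    p * (1 - (p - q) ^ 2) = p * q * p := by
  have hpp : ∀ x, p * (p * x) = p * x := fun x => by rw [← mul_assoc, hp.eq]
  simp only [sq, mul_sub, sub_mul, mul_one, mul_assoc, hp.eq, hq.eq, hpp]
  abel

theorem IsIdempotentElem.one_sub_sub_sq_mul (hp : IsIdempotentElem p) (hq : IsIdempotentElem q) :
    (1 - (p - q) ^ 2) * p = p * q * p := by
  simp only [sq, mul_sub, sub_mul, one_mul, mul_assoc, hp.eq, hq.eq]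
  abel

end Ring

section StarRing

variable {R : Type*} [Ring R] [StarRing R]

theorem IsSelfAdjoint.units_inv {u : Rˣ} (hu : IsSelfAdjoint (u : R)) :
    IsSelfAdjoint (↑u⁻¹ : R) := by
  rw [IsSelfAdjoint, ← Units.coe_star_inv, show star u = u from Units.ext hu]

theorem exists_isStarProjection_of_isIdempotentElem_of_isUnit {p : R} (hp : IsIdempotentElem p)
    (hz : IsUnit (1 - (p - star p) ^ 2)) :
    ∃ s, IsStarProjection s ∧ p * s = p ∧ s * p = s := by
  obtain ⟨z, hz⟩ := hz
  have hz_sa : IsSelfAdjoint (z : R) := by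
    rw [IsSelfAdjoint, hz, star_sub, star_one, star_pow, star_sub, star_star,
      ← neg_sub p (star p), neg_sq]
  have hpz : p * z = p * star p * p := hz ▸ hp.mul_one_sub_sub_sq hp.star
  have hzp : z * p = p * star p * p := hz ▸ hp.one_sub_sub_sq_mul hp.star
  have hzq : (z : R) * star p = star p * z := by
    simpa [hz_sa.star_eq, mul_assoc] using (congrArg star hpz).trans (congrArg star hzp).symm
  have hcp : Commute (↑z⁻¹ : R) p := Commute.units_inv_left (hzp.trans hpz.symm)
  have hcq : Commute (↑z⁻¹ : R) (star p) := Commute.units_inv_left hzq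
  refine ⟨star p * p * ↑z⁻¹, ⟨?_, ?_⟩, ?_, ?_⟩
  · calc star p * p * ↑z⁻¹ * (star p * p * ↑z⁻¹)
        = star p * (p * star p * p) * (↑z⁻¹ * ↑z⁻¹) := by
          simp only [mul_assoc, hcq.left_comm, hcp.left_comm]
      _ = star p * p * ↑z⁻¹ := by rw [← hpz]; simp [mul_assoc]
  · rw [IsSelfAdjoint, star_mul, star_mul, star_star, hz_sa.units_inv.star_eq]
    exact (hcq.mul_right hcp).eq
  · calc p * (star p * p * ↑z⁻¹) = p * z * ↑z⁻¹ := by rw [hpz]; simp only [mul_assoc]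
      _ = p := by simp [mul_assoc]
  · rw [mul_assoc, hcp.eq, ← mul_assoc, mul_assoc (star p), hp.eq]

theorem IsStarProjection.isMoorePenroseInverse_inv_mul_star {a s : R} (hs : IsStarProjection s)
    (has : a * s = a) (d : Rˣ) (hd : (d : R) = star a * a + (1 - s)) :
    IsMoorePenroseInverse a (↑d⁻¹ * star a) := by
  have hsa : s * star a = star a := by
    simpa only [star_mul, hs.isSelfAdjoint.star_eq] using congrArg star has
  have hds : d * s = star a * a := by
    rw [hd, add_mul, sub_mul, one_mul, hs.isIdempotentElem.eq, mul_assoc, has, sub_self, add_zero]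
  have hsd : s * d = star a * a := by
    rw [hd, mul_add, mul_sub, mul_one, hs.isIdempotentElem.eq, ← mul_assoc, hsa, sub_self,
      add_zero]
  have hd_sa : IsSelfAdjoint (d : R) := by
    rw [hd]
    exact ((IsSelfAdjoint.star_mul_self a).add ((IsSelfAdjoint.one R).sub hs.isSelfAdjoint))
  have hba : ↑d⁻¹ * star a * a = s := by
    rw [mul_assoc, ← hds, ← mul_assoc, Units.inv_mul, one_mul]
  have hcs : Commute s (↑d⁻¹ : R) := Commute.units_inv_right (hsd.trans hds.symm)
  refine ⟨?_, ?_, ?_, ?_⟩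
  · rw [mul_assoc, hba, has]
  · rw [hba, ← mul_assoc, hcs.eq, mul_assoc, hsa]
  · rw [IsSelfAdjoint, star_mul, star_mul, star_star, hd_sa.units_inv.star_eq, mul_assoc]
  · rw [hba]
    exact hs.isSelfAdjoint

end StarRing

section CStarAlgebra

variable {A : Type*} [CStarAlgebra A] [PartialOrder A] [StarOrderedRing A]

theorem exists_isStarProjection_of_isIdempotentElem {p : A} (hp : IsIdempotentElem p) :
    ∃ s, IsStarProjection s ∧ p * s = p ∧ s * p = s := by
  refine exists_isStarProjection_of_isIdempotentElem_of_isUnit hp ?_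
  have hz : 1 - (p - star p) ^ 2 = 1 + star (p - star p) * (p - star p) := by
    rw [star_sub, star_star, sq, ← neg_sub p (star p), neg_mul, sub_eq_add_neg]
  rw [hz]
  exact CStarAlgebra.isUnit_of_le 1 (le_add_of_nonneg_right (star_mul_self_nonneg _))

theorem IsStarProjection.isUnit_star_mul_self_add_one_sub {a s t : A} (hs : IsStarProjection s)
    (hst : s = t * a) : IsUnit (star a * a + (1 - s)) := by
  have hs_le : s ≤ (‖t‖ ^ 2) • (star a * a) :=
    calc s = star (t * a) * (t * a) := by
          rw [← hst, hs.isSelfAdjoint.star_eq, hs.isIdempotentElem.eq]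
      _ = star a * (star t * t) * a := by rw [star_mul]; noncomm_ring
      _ ≤ star a * algebraMap ℝ A (‖t‖ ^ 2) * a :=
          star_left_conjugate_le_conjugate CStarAlgebra.star_mul_le_algebraMap_norm_sq a
      _ = (‖t‖ ^ 2) • (star a * a) := by
          rw [Algebra.algebraMap_eq_smul_one, mul_smul_comm, mul_one, smul_mul_assoc]
  set C : ℝ := ‖t‖ ^ 2 + 1
  have hC : 0 < C := by positivity
  have h_one_le : 1 ≤ C • (star a * a + (1 - s)) :=
    calc (1 : A) = s + (1 - s) := by abel
      _ ≤ (‖t‖ ^ 2) • (star a * a) + (1 : ℝ) • (1 - s) := by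
          rw [one_smul]; exact add_le_add_left hs_le _
      _ ≤ C • (star a * a) + C • (1 - s) := by
          gcongr
          · exact star_mul_self_nonneg a
          · linarith
          · exact sub_nonneg.2 hs.le_one
          · simp [C]
      _ = C • (star a * a + (1 - s)) := (smul_add _ _ _).symm
  refine CStarAlgebra.isUnit_of_le (algebraMap ℝ A C⁻¹) ?_
    (isStrictlyPositive_algebraMap (inv_pos.2 hC))
  calc algebraMap ℝ A C⁻¹ = C⁻¹ • 1 := Algebra.algebraMap_eq_smul_one _
    _ ≤ C⁻¹ • C • (star a * a + (1 - s)) := by gcongr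
    _ = star a * a + (1 - s) := inv_smul_smul₀ hC.ne' _

end CStarAlgebra

/-- In a unital C*-algebra, an element is generalized invertible iff it is
Moore-Penrose invertible. -/
theorem generalized_inv_iff_moore_penrose_inv {A : Type*} [CStarAlgebra A] (a : A) :
    (∃ b : A, a * b * a = a) ↔
      (∃ b : A, a * b * a = a ∧ b * a * b = b ∧
        star (a * b) = a * b ∧ star (b * a) = b * a) := by
  let _ : PartialOrder A := CStarAlgebra.spectralOrder A
  have _ : StarOrderedRing A := CStarAlgebra.spectralOrderedRing A
  refine ⟨fun ⟨b, hab⟩ => ?_, fun ⟨b, hab, _⟩ => ⟨b, hab⟩⟩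
  have hab' : a * (b * a) = a := by rw [← mul_assoc, hab]
  have hba : IsIdempotentElem (b * a) := by rw [IsIdempotentElem, mul_assoc, hab']
  obtain ⟨s, hs, hbas, hsba⟩ := exists_isStarProjection_of_isIdempotentElem hba
  have has : a * s = a := by rw [← hab', mul_assoc, hbas]
  obtain ⟨d, hd⟩ := hs.isUnit_star_mul_self_add_one_sub (t := s * b) (by rw [mul_assoc, hsba])
  obtain ⟨h₁, h₂, h₃, h₄⟩ := hs.isMoorePenroseInverse_inv_mul_star has d hd
  exact ⟨_, h₁, h₂, h₃, h₄⟩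
end

section
/- Let A be a unital C*-algebra and a ∈ A. Then a is Moore-Penrose invertible if and only if a*a is invertible or 0 is an isolated point of the spectrum of a*a. -/
/-!
Write `x = a⋆a`. An MP inverse `b` of `a` yields the commuting generalized inverse `b b⋆` of `x`
(`x y x = x`, `y x y = y`, `x y = y x`); conversely a self-adjoint such `y` yields the MP inverse
`y a⋆`, the identity `a y x = a` coming from the C⋆-identity.

If `y` is a commuting generalized inverse of `x`, then `p = x y` is an idempotent commuting with the
unit `u = x + (1 - p)` and `x = u p`, so `σ(x) ⊆ σ(u) ∪ {0}` with `0 ∉ σ(u)` and `σ(u)` closed.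
Conversely, if `0` is isolated in `σ(x)`, then `z ↦ z⁻¹` (with `0⁻¹ = 0`) is continuous on `σ(x)`,
and the continuous functional calculus produces the self-adjoint generalized inverse
`cfc (·⁻¹) x`.
-/

open Filter Topology

structure IsMoorePenroseInverse_s1 {R : Type*} [Mul R] [Star R] (a b : R) : Prop where
  mul_inv_mul : a * b * a = a
  inv_mul_inv : b * a * b = b
  isSelfAdjoint_mul_inv : IsSelfAdjoint (a * b)
  isSelfAdjoint_inv_mul : IsSelfAdjoint (b * a)

structure IsGroupInverse {R : Type*} [Mul R] (x y : R) : Prop where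
  mul_inv_mul : x * y * x = x
  inv_mul_inv : y * x * y = y
  commute : Commute x y

lemma not_accPt_of_subset_insert {X : Type*} [TopologicalSpace X] {z : X} {S T : Set X}
    (hST : S ⊆ insert z T) (hz : z ∉ closure T) : ¬AccPt z (𝓟 S) := by
  rw [accPt_principal_iff_clusterPt, ← mem_closure_iff_clusterPt]
  refine fun hzS => hz (closure_mono (fun w hw => ?_) hzS)
  exact (hST hw.1).resolve_left hw.2

lemma continuousOn_inv₀_of_not_accPt_zero {𝕜 : Type*} [NormedDivisionRing 𝕜] {S : Set 𝕜}
    (hS : ¬AccPt 0 (𝓟 S)) : ContinuousOn (·⁻¹) S := by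
  intro z _
  rcases eq_or_ne z 0 with rfl | hz
  · exact continuousWithinAt_of_not_accPt hS
  · exact (continuousAt_inv₀ hz).continuousWithinAt

section Ring

variable {R : Type*} [Ring R]

lemma IsIdempotentElem.mul_add_mul_one_sub_mul {p s t s' t' : R} (hp : IsIdempotentElem p)
    (hps' : Commute p s') (hpt' : Commute p t') :
    (s * p + t * (1 - p)) * (s' * p + t' * (1 - p)) = s * s' * p + t * t' * (1 - p) := by
  have hqs' : Commute (1 - p) s' := (Commute.one_left s').sub_left hps'
  have hqt' : Commute (1 - p) t' := (Commute.one_left t').sub_left hpt'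
  have h₁ : p * (s' * p) = s' * p := by rw [← mul_assoc, hps'.eq, mul_assoc, hp.eq]
  have h₂ : p * (t' * (1 - p)) = 0 := by
    rw [← mul_assoc, hpt'.eq, mul_assoc, hp.mul_one_sub_self, mul_zero]
  have h₃ : (1 - p) * (s' * p) = 0 := by
    rw [← mul_assoc, hqs'.eq, mul_assoc, hp.one_sub_mul_self, mul_zero]
  have h₄ : (1 - p) * (t' * (1 - p)) = t' * (1 - p) := by
    rw [← mul_assoc, hqt'.eq, mul_assoc, hp.one_sub.eq]
  simp only [add_mul, mul_add, mul_assoc, h₁, h₂, h₃, h₄, mul_zero, add_zero, zero_add]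

lemma IsIdempotentElem.isUnit_mul_add_mul_one_sub {p s t : R} (hp : IsIdempotentElem p)
    (hps : Commute p s) (hpt : Commute p t) (hs : IsUnit s) (ht : IsUnit t) :
    IsUnit (s * p + t * (1 - p)) := by
  obtain ⟨s, rfl⟩ := hs
  obtain ⟨t, rfl⟩ := ht
  refine ⟨⟨_, ↑s⁻¹ * p + ↑t⁻¹ * (1 - p), ?_, ?_⟩, rfl⟩
  · rw [hp.mul_add_mul_one_sub_mul hps.units_inv_right hpt.units_inv_right, s.mul_inv, t.mul_inv]
    simp
  · rw [hp.mul_add_mul_one_sub_mul hps hpt, s.inv_mul, t.inv_mul]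
    simp

namespace IsGroupInverse

variable {x y : R}

lemma mul_mul_inv_mul (h : IsGroupInverse x y) : x * (x * y) = x := by
  rw [h.commute.eq, ← mul_assoc, h.mul_inv_mul]

lemma mul_inv_mul_inv (h : IsGroupInverse x y) : y * (x * y) = y := by
  rw [← mul_assoc, h.inv_mul_inv]

lemma isIdempotentElem_mul (h : IsGroupInverse x y) : IsIdempotentElem (x * y) := by
  rw [IsIdempotentElem, ← mul_assoc, h.mul_inv_mul]

lemma commute_mul_left (h : IsGroupInverse x y) : Commute (x * y) x :=
  (Commute.refl x).mul_left h.commute.symm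

lemma commute_mul_right (h : IsGroupInverse x y) : Commute (x * y) y :=
  h.commute.mul_left (Commute.refl y)

lemma add_one_sub_mul_mul (h : IsGroupInverse x y) : (x + (1 - x * y)) * (x * y) = x := by
  rw [add_mul, h.isIdempotentElem_mul.one_sub_mul_self, add_zero, h.mul_mul_inv_mul]

lemma commute_add_one_sub_mul (h : IsGroupInverse x y) : Commute (x * y) (x + (1 - x * y)) :=
  h.commute_mul_left.add_right ((Commute.one_right _).sub_right (Commute.refl _))

lemma isUnit_add_one_sub_mul (h : IsGroupInverse x y) : IsUnit (x + (1 - x * y)) := by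
  have hp := h.isIdempotentElem_mul
  have hcorner : ∀ z, z * (x * y) = z → z + (1 - x * y) = z * (x * y) + 1 * (1 - x * y) := by
    intro z hz
    rw [hz, one_mul]
  refine ⟨⟨_, y + (1 - x * y), ?_, ?_⟩, rfl⟩
  · rw [hcorner x h.mul_mul_inv_mul, hcorner y h.mul_inv_mul_inv,
      hp.mul_add_mul_one_sub_mul h.commute_mul_right (Commute.one_right _), hp.eq]
    simp
  · rw [hcorner x h.mul_mul_inv_mul, hcorner y h.mul_inv_mul_inv,
      hp.mul_add_mul_one_sub_mul h.commute_mul_left (Commute.one_right _), ← h.commute.eq, hp.eq]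
    simp

end IsGroupInverse

end Ring

lemma IsIdempotentElem.spectrum_mul_subset {𝕜 A : Type*} [Field 𝕜] [Ring A] [Algebra 𝕜 A]
    {p u : A} (hp : IsIdempotentElem p) (hpu : Commute p u) :
    spectrum 𝕜 (u * p) ⊆ insert 0 (spectrum 𝕜 u) := by
  intro μ hμ
  rw [Set.mem_insert_iff, or_iff_not_imp_left]
  intro hμ0
  by_contra hμu
  refine (spectrum.mem_iff.mp hμ) ?_
  have hdecomp : algebraMap 𝕜 A μ - u * p =
      (algebraMap 𝕜 A μ - u) * p + algebraMap 𝕜 A μ * (1 - p) := by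
    noncomm_ring
  rw [hdecomp]
  exact hp.isUnit_mul_add_mul_one_sub ((Algebra.commute_algebraMap_right μ p).sub_right hpu)
    (Algebra.commute_algebraMap_right μ p) (spectrum.notMem_iff.mp hμu)
    ((isUnit_iff_ne_zero.mpr hμ0).map _)

lemma IsGroupInverse.not_accPt_zero_spectrum {𝕜 A : Type*} [NormedField 𝕜] [NormedRing A]
    [NormedAlgebra 𝕜 A] [CompleteSpace A] {x y : A} (h : IsGroupInverse x y) :
    ¬AccPt 0 (𝓟 (spectrum 𝕜 x)) := by
  have hx : spectrum 𝕜 x ⊆ insert 0 (spectrum 𝕜 (x + (1 - x * y))) := by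
    conv_lhs => rw [← h.add_one_sub_mul_mul]
    exact h.isIdempotentElem_mul.spectrum_mul_subset h.commute_add_one_sub_mul
  refine not_accPt_of_subset_insert hx ?_
  rw [(spectrum.isClosed _).closure_eq]
  exact spectrum.zero_notMem 𝕜 h.isUnit_add_one_sub_mul

namespace IsMoorePenroseInverse_s1

variable {R : Type*} [Semigroup R] [StarMul R] {a b : R}

lemma star_inv_mul_star (h : IsMoorePenroseInverse_s1 a b) : star b * star a = a * b := by
  rw [← star_mul, h.isSelfAdjoint_mul_inv.star_eq]

lemma star_mul_star_inv (h : IsMoorePenroseInverse_s1 a b) : star a * star b = b * a := by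
  rw [← star_mul, h.isSelfAdjoint_inv_mul.star_eq]

lemma isGroupInverse_star_mul_self (h : IsMoorePenroseInverse_s1 a b) :
    IsGroupInverse (star a * a) (b * star b) := by
  have hxy : star a * a * (b * star b) = b * a :=
    calc star a * a * (b * star b) = star a * (a * b) * star b := by simp only [mul_assoc]
      _ = (star a * star b) * (star a * star b) := by
        rw [← h.star_inv_mul_star]; simp only [mul_assoc]
      _ = b * a := by rw [h.star_mul_star_inv, ← mul_assoc, h.inv_mul_inv]
  have hyx : b * star b * (star a * a) = b * a :=
    calc b * star b * (star a * a) = b * (star b * star a) * a := by simp only [mul_assoc]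
      _ = b * a := by rw [h.star_inv_mul_star, ← mul_assoc, h.inv_mul_inv]
  refine ⟨?_, ?_, hxy.trans hyx.symm⟩
  · calc star a * a * (b * star b) * (star a * a) = star a * star b * star a * a := by
          rw [hxy, ← h.star_mul_star_inv]; simp only [mul_assoc]
      _ = star a * a := by rw [← star_mul, ← star_mul, ← mul_assoc, h.mul_inv_mul]
  · rw [hyx, ← mul_assoc, h.inv_mul_inv]

end IsMoorePenroseInverse_s1

lemma IsGroupInverse.isMoorePenroseInverse_mul_star {R : Type*} [NonUnitalNormedRing R]
    [StarRing R] [CStarRing R] {a y : R} (h : IsGroupInverse (star a * a) y)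
    (hy : IsSelfAdjoint y) : IsMoorePenroseInverse_s1 a (y * star a) := by
  have hx : IsSelfAdjoint (star a * a) := .star_mul_self a
  have hker : star a * (a - a * y * (star a * a)) = 0 := by
    rw [mul_sub, show star a * (a * y * (star a * a)) = star a * a * y * (star a * a) by
      simp only [mul_assoc], h.mul_inv_mul, sub_self]
  have hstar : star (a - a * y * (star a * a)) = star a - star a * a * y * star a := by
    rw [star_sub, star_mul (a * y), star_mul a, hx.star_eq, hy.star_eq, ← mul_assoc]
  have hayx : a * y * (star a * a) = a := by
    have hnorm : star (a - a * y * (star a * a)) * (a - a * y * (star a * a)) = 0 := by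
      rw [hstar, sub_mul, mul_assoc _ (star a), hker, mul_zero, sub_zero]
    rw [CStarRing.star_mul_self_eq_zero_iff, sub_eq_zero] at hnorm
    exact hnorm.symm
  refine ⟨?_, ?_, ?_, ?_⟩
  · rw [← mul_assoc a y, mul_assoc _ (star a), hayx]
  · rw [mul_assoc y (star a) a, ← mul_assoc, h.inv_mul_inv]
  · rw [← mul_assoc]
    exact hy.conjugate a
  · rw [mul_assoc]
    exact (IsSelfAdjoint.commute_iff hy hx).mp h.commute.symm

section CFC

variable {A : Type*} [CStarAlgebra A] {x : A}

lemma IsSelfAdjoint.isSelfAdjoint_cfc_inv (hx : IsSelfAdjoint x) :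
    IsSelfAdjoint (cfc (·⁻¹ : ℂ → ℂ) x) := by
  rw [isSelfAdjoint_iff, ← cfc_star]
  refine cfc_congr fun z hz => ?_
  rw [star_inv₀, hx.mem_spectrum_eq_re hz, Complex.star_def, Complex.conj_ofReal]

lemma IsStarNormal.isGroupInverse_cfc_inv (hx : IsStarNormal x)
    (h0 : ¬AccPt 0 (𝓟 (spectrum ℂ x))) : IsGroupInverse x (cfc (·⁻¹ : ℂ → ℂ) x) := by
  have hinv := continuousOn_inv₀_of_not_accPt_zero h0
  refine ⟨?_, ?_, ?_⟩
  · calc x * cfc (·⁻¹) x * x = cfc (fun z : ℂ => z * z⁻¹ * z) x := by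
          rw [cfc_mul (fun z => z * z⁻¹) (fun z => z) x ((continuousOn_id' _).mul hinv),
            cfc_mul (fun z => z) (·⁻¹) x (continuousOn_id' _) hinv, cfc_id' ℂ x]
      _ = x := by simp only [mul_inv_mul_cancel, cfc_id' ℂ x]
  · calc cfc (·⁻¹) x * x * cfc (·⁻¹) x = cfc (fun z : ℂ => z⁻¹ * z * z⁻¹) x := by
          rw [cfc_mul (fun z => z⁻¹ * z) (·⁻¹) x (hinv.mul (continuousOn_id' _)) hinv,
            cfc_mul (·⁻¹) (fun z => z) x hinv (continuousOn_id' _), cfc_id' ℂ x]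
      _ = cfc (·⁻¹) x :=
          cfc_congr fun z _ => by simpa only [inv_inv] using mul_inv_mul_cancel z⁻¹
  · simpa only [cfc_id' ℂ x] using cfc_commute_cfc (fun z : ℂ => z) (·⁻¹) x

end CFC

theorem exists_isMoorePenroseInverse_iff_not_accPt_zero {A : Type*} [CStarAlgebra A] (a : A) :
    (∃ b, IsMoorePenroseInverse_s1 a b) ↔ ¬AccPt 0 (𝓟 (spectrum ℂ (star a * a))) := by
  have hx : IsSelfAdjoint (star a * a) := .star_mul_self a
  refine ⟨fun ⟨b, hb⟩ => hb.isGroupInverse_star_mul_self.not_accPt_zero_spectrum, fun h0 => ?_⟩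
  exact ⟨_, (hx.isStarNormal.isGroupInverse_cfc_inv h0).isMoorePenroseInverse_mul_star
    hx.isSelfAdjoint_cfc_inv⟩

/-- An element of a unital C*-algebra is Moore-Penrose invertible iff `a*a` is
invertible or `0` is an isolated point of the spectrum of `a*a`. -/
theorem moore_penrose_iff_isolated_zero {A : Type*} [CStarAlgebra A] (a : A) :
    (∃ b : A, a * b * a = a ∧ b * a * b = b ∧
        star (a * b) = a * b ∧ star (b * a) = b * a) ↔
      (IsUnit (star a * a) ∨
        ((0 : ℂ) ∈ spectrum ℂ (star a * a) ∧
          ¬ AccPt (0 : ℂ) (Filter.principal (spectrum ℂ (star a * a))))) := by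
  have hmp : (∃ b : A, a * b * a = a ∧ b * a * b = b ∧
      star (a * b) = a * b ∧ star (b * a) = b * a) ↔ ∃ b, IsMoorePenroseInverse_s1 a b :=
    exists_congr fun b => ⟨fun ⟨h₁, h₂, h₃, h₄⟩ => ⟨h₁, h₂, h₃, h₄⟩,
      fun ⟨h₁, h₂, h₃, h₄⟩ => ⟨h₁, h₂, h₃, h₄⟩⟩
  have hmem : AccPt (0 : ℂ) (𝓟 (spectrum ℂ (star a * a))) → (0 : ℂ) ∈ spectrum ℂ (star a * a) :=
    fun h => (spectrum.isClosed _).closure_subset (mem_closure_iff_clusterPt.mpr h.clusterPt)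
  rw [hmp, exists_isMoorePenroseInverse_iff_not_accPt_zero, ← spectrum.zero_notMem_iff ℂ]
  tauto
end

section
/- Let A be a unital C*-algebra and a ∈ A. Then a is Moore-Penrose invertible if and only if there exists a projection q ∈ A (q* = q = q²) such that aq = 0 and a*a + q is invertible. Moreover, in this case q is uniquely determined: q = e − a†a, and a† = (a*a + q)⁻¹ a*. -/
/-!
If `b` is a Moore-Penrose inverse of `a`, then `q = 1 - b * a` is the projection onto the kernel
of `a`, and `star a * a + q` is invertible with inverse `b * star b + q`. Conversely, if `q` is a
projection with `a * q = 0` and `u = star a * a + q` is invertible, then `u` commutes with `q` and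
fixes it, so `u⁻¹ * star a * a = u⁻¹ * (u - q) = 1 - q`, and `u⁻¹ * star a` satisfies the four
Penrose equations. Uniqueness: `(1 - b * a) * u = q = q * u` and `u * b = star a`, and `u` cancels.
-/

open scoped Ring

section StarRing

variable {R : Type*} [Ring R] [StarRing R]

structure IsMoorePenroseInverse_s2 (a b : R) : Prop where
  mul_mul_self : a * b * a = a
  mul_mul_self_inv : b * a * b = b
  isSelfAdjoint_mul : IsSelfAdjoint (a * b)
  isSelfAdjoint_inv_mul : IsSelfAdjoint (b * a)

theorem isMoorePenroseInverse_iff {a b : R} :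
    IsMoorePenroseInverse_s2 a b ↔
      a * b * a = a ∧ b * a * b = b ∧ star (a * b) = a * b ∧ star (b * a) = b * a :=
  ⟨fun ⟨h₁, h₂, h₃, h₄⟩ => ⟨h₁, h₂, h₃, h₄⟩, fun ⟨h₁, h₂, h₃, h₄⟩ => ⟨h₁, h₂, h₃, h₄⟩⟩

theorem IsSelfAdjoint.isUnit_of_mul_eq_one {M : Type*} [Monoid M] [StarMul M] {u v : M}
    (hu : IsSelfAdjoint u) (h : u * v = 1) : IsUnit u :=
  isUnit_iff_exists_and_exists.2 ⟨⟨v, h⟩, ⟨star v, by rw [← hu.star_eq, ← star_mul, h, star_one]⟩⟩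

namespace IsMoorePenroseInverse_s2

variable {a b : R} (h : IsMoorePenroseInverse_s2 a b)
include h

theorem star_mul_mul_self : star a * (a * b) = star a := by
  rw [← h.isSelfAdjoint_mul.star_eq, ← star_mul, h.mul_mul_self]

theorem mul_star : b * a * star a = star a := by
  rw [← h.isSelfAdjoint_inv_mul.star_eq, ← star_mul, ← mul_assoc, h.mul_mul_self]

theorem isStarProjection_one_sub_mul : IsStarProjection (1 - b * a) :=
  IsStarProjection.one_sub
    ⟨by rw [IsIdempotentElem, ← mul_assoc, h.mul_mul_self_inv], h.isSelfAdjoint_inv_mul⟩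

theorem mul_one_sub_mul : a * (1 - b * a) = 0 := by
  rw [mul_sub, mul_one, ← mul_assoc, h.mul_mul_self, sub_self]

theorem one_sub_mul_mul_self_inv : (1 - b * a) * b = 0 := by
  rw [sub_mul, one_mul, h.mul_mul_self_inv, sub_self]

theorem isUnit_star_mul_self_add_one_sub_mul : IsUnit (star a * a + (1 - b * a)) := by
  set q := 1 - b * a
  have hq := h.isStarProjection_one_sub_mul
  refine ((IsSelfAdjoint.star_mul_self a).add hq.isSelfAdjoint).isUnit_of_mul_eq_one
    (v := b * star b + q) ?_
  calc (star a * a + q) * (b * star b + q)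
      = star a * (a * b) * star b + star a * (a * q) + q * b * star b + q * q := by noncomm_ring
    _ = star (b * a) + q := by
      rw [h.star_mul_mul_self, h.mul_one_sub_mul, h.one_sub_mul_mul_self_inv,
        hq.isIdempotentElem.eq, star_mul, mul_zero, zero_mul, add_zero, add_zero]
    _ = 1 := by rw [h.isSelfAdjoint_inv_mul.star_eq, add_sub_cancel]

end IsMoorePenroseInverse_s2

section Projection

variable {a q : R} (hq : IsStarProjection q) (haq : a * q = 0)
include hq haq

theorem IsStarProjection.mul_star_eq_zero : q * star a = 0 := by
  rw [← hq.isSelfAdjoint.star_eq, ← star_mul, haq, star_zero]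

theorem IsStarProjection.star_mul_self_add_mul : (star a * a + q) * q = q := by
  rw [add_mul, mul_assoc, haq, mul_zero, hq.isIdempotentElem.eq, zero_add]

theorem IsStarProjection.mul_star_mul_self_add : q * (star a * a + q) = q := by
  rw [mul_add, ← mul_assoc, hq.mul_star_eq_zero haq, zero_mul, hq.isIdempotentElem.eq, zero_add]

variable (hu : IsUnit (star a * a + q))
include hu

theorem IsStarProjection.mul_inverse_star_mul_self_add : q * (star a * a + q)⁻¹ʳ = q :=
  hu.mul_right_cancel (by rw [mul_assoc, Ring.inverse_mul_cancel _ hu, mul_one,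
    hq.mul_star_mul_self_add haq])

theorem IsStarProjection.inverse_star_mul_self_add_mul : (star a * a + q)⁻¹ʳ * q = q :=
  hu.mul_left_cancel (by rw [Ring.mul_inverse_cancel_left _ _ hu,
    hq.star_mul_self_add_mul haq])

theorem IsStarProjection.inverse_star_mul_self_add_mul_star_mul_self :
    (star a * a + q)⁻¹ʳ * star a * a = 1 - q :=
  calc (star a * a + q)⁻¹ʳ * star a * a
      = (star a * a + q)⁻¹ʳ * (star a * a + q) - (star a * a + q)⁻¹ʳ * q := by noncomm_ring
    _ = 1 - q := by
      rw [Ring.inverse_mul_cancel _ hu, hq.inverse_star_mul_self_add_mul haq hu]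

theorem IsStarProjection.isMoorePenroseInverse_inverse_mul_star :
    IsMoorePenroseInverse_s2 a ((star a * a + q)⁻¹ʳ * star a) := by
  have hba := hq.inverse_star_mul_self_add_mul_star_mul_self haq hu
  refine ⟨?_, ?_, ?_, ?_⟩
  · rw [mul_assoc, hba, mul_sub, mul_one, haq, sub_zero]
  · rw [hba, sub_mul, one_mul, ← mul_assoc, hq.mul_inverse_star_mul_self_add haq hu,
      hq.mul_star_eq_zero haq, sub_zero]
  · rw [← mul_assoc]
    exact ((IsSelfAdjoint.star_mul_self a).add hq.isSelfAdjoint).ringInverse.conjugate a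
  · rw [hba]
    exact (isStarProjection_one_sub_iff.2 hq).isSelfAdjoint

theorem IsMoorePenroseInverse_s2.eq_one_sub_mul {b : R} (h : IsMoorePenroseInverse_s2 a b) :
    q = 1 - b * a := by
  refine hu.mul_right_cancel ?_
  calc q * (star a * a + q) = q := hq.mul_star_mul_self_add haq
    _ = star a * a + q - b * a * star a * a - b * (a * q) := by
      rw [h.mul_star, haq, mul_zero, sub_zero, add_sub_cancel_left]
    _ = (1 - b * a) * (star a * a + q) := by noncomm_ring

theorem IsMoorePenroseInverse_s2.eq_inverse_mul_star {b : R} (h : IsMoorePenroseInverse_s2 a b) :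
    b = (star a * a + q)⁻¹ʳ * star a := by
  refine hu.mul_left_cancel ?_
  rw [Ring.mul_inverse_cancel_left _ _ hu, add_mul, mul_assoc, h.star_mul_mul_self,
    h.eq_one_sub_mul hq haq hu, h.one_sub_mul_mul_self_inv, add_zero]

end Projection

end StarRing

/-- An element of a unital C*-algebra is Moore-Penrose invertible iff there is a
projection `q` with `a * q = 0` and `star a * a + q` invertible; in that case `q`
is unique, `q = 1 - a† * a` and `a† = (star a * a + q)⁻¹ * star a`. -/
theorem moore_penrose_iff_projection {A : Type*} [CStarAlgebra A] (a : A) :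
    ((∃ b : A, a * b * a = a ∧ b * a * b = b ∧
        star (a * b) = a * b ∧ star (b * a) = b * a) ↔
      (∃ q : A, star q = q ∧ q * q = q ∧ a * q = 0 ∧ IsUnit (star a * a + q))) ∧
    (∀ b : A, (a * b * a = a ∧ b * a * b = b ∧
        star (a * b) = a * b ∧ star (b * a) = b * a) →
      ∀ q : A, star q = q → q * q = q → a * q = 0 → IsUnit (star a * a + q) →
        q = 1 - b * a ∧ b = Ring.inverse (star a * a + q) * star a) := by
  simp only [← isMoorePenroseInverse_iff]
  refine ⟨⟨fun ⟨b, hb⟩ => ?_, fun ⟨q, hqs, hqq, haq, hu⟩ => ?_⟩,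
    fun b hb q hqs hqq haq hu => ?_⟩
  · have hq := hb.isStarProjection_one_sub_mul
    exact ⟨1 - b * a, hq.isSelfAdjoint, hq.isIdempotentElem, hb.mul_one_sub_mul,
      hb.isUnit_star_mul_self_add_one_sub_mul⟩
  · exact ⟨_, IsStarProjection.isMoorePenroseInverse_inverse_mul_star ⟨hqq, hqs⟩ haq hu⟩
  · exact ⟨hb.eq_one_sub_mul ⟨hqq, hqs⟩ haq hu, hb.eq_inverse_mul_star ⟨hqq, hqs⟩ haq hu⟩
end

section
/- If a is a Moore-Penrose invertible element of a unital C*-algebra A with Moore-Penrose inverse a†, then ‖a†‖² = sup { 1/λ : λ ∈ σ(a*a) \ {0} }. -/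
/-!
Put `c = a⋆a` and `d = b b⋆`. The Penrose equations make `d` the group inverse of `c`: the two
commute, `c d c = c` and `d c d = d`; in the corner cut out by the idempotent `c d` they are
honest inverses. Hence for `λ ≠ 0`, `λ ∈ σ(c)` exactly when `λ⁻¹ ∈ σ(d)`, so the set on the
right-hand side is `σ(d) \ {0}`. As `d ≥ 0`, its supremum is `‖d‖ = ‖b‖²`.
-/

structure IsGroupInverse_s3 {R : Type*} [Mul R] (c d : R) : Prop where
  commute : Commute c d
  mul_mul_self : c * d * c = c
  mul_self_mul : d * c * d = d

namespace IsGroupInverse_s3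

variable {R : Type*} [Ring R] {c d : R}

theorem symm (h : IsGroupInverse_s3 c d) : IsGroupInverse_s3 d c :=
  ⟨h.commute.symm, h.mul_self_mul, h.mul_mul_self⟩

variable {𝕜 : Type*} [Field 𝕜] [Algebra 𝕜 R]

/-- With `e = c d` and `z = (s - d)⁻¹`, the inverse of `r - c` is `s (1 - e - d z)`: it is
`r⁻¹ = s` off the corner of `e` and `-s d z` on it. -/
theorem isUnit_algebraMap_sub (h : IsGroupInverse_s3 c d) {r s : 𝕜} (hrs : r * s = 1)
    (hs : IsUnit (algebraMap 𝕜 R s - d)) : IsUnit (algebraMap 𝕜 R r - c) := by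
  obtain ⟨u, hu⟩ := hs
  set z : R := ↑u⁻¹
  have hcz : Commute c z :=
    (hu ▸ (Algebra.commute_algebraMap_right s c).sub_right h.commute : Commute c u).units_inv_right
  set w := s • (1 - c * d - d * z)
  have hcw : Commute (algebraMap 𝕜 R r - c) w :=
    (Algebra.commute_algebraMap_left r w).sub_left <| .smul_right
      (((Commute.one_right c).sub_right ((Commute.refl c).mul_right h.commute)).sub_right
        (h.commute.mul_right hcz)) s
  have hcdc : c * (c * d) = c := by rw [h.commute.eq, ← mul_assoc, h.mul_mul_self]
  have hcdd : c * d * d = d := by rw [h.commute.eq, h.mul_self_mul]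
  have he : s • (c * d * z) = c * d + d * z :=
    calc s • (c * d * z) = c * d * (algebraMap 𝕜 R s - d) * z + c * d * d * z := by
          rw [Algebra.algebraMap_eq_smul_one, mul_sub, sub_mul, mul_smul_one, smul_mul_assoc,
            sub_add_cancel]
      _ = c * d + d * z := by rw [← hu, mul_assoc (c * d), u.mul_inv, mul_one, hcdd]
  have hw : (algebraMap 𝕜 R r - c) * w = 1 := by
    rw [mul_smul_comm, sub_mul, Algebra.algebraMap_eq_smul_one, smul_mul_assoc, one_mul,
      mul_sub, mul_sub, mul_one, hcdc, ← mul_assoc, smul_sub, smul_smul, mul_comm, hrs, one_smul,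
      sub_self, zero_sub, smul_neg, sub_neg_eq_add, he, sub_sub, sub_add_cancel]
  exact (hcw.isUnit_mul_iff.mp (hw ▸ isUnit_one)).1

theorem inv_mem_spectrum_iff (h : IsGroupInverse_s3 c d) {r : 𝕜} (hr : r ≠ 0) :
    r⁻¹ ∈ spectrum 𝕜 d ↔ r ∈ spectrum 𝕜 c := by
  rw [spectrum.mem_iff, spectrum.mem_iff]
  exact ⟨fun hd hc => hd (h.symm.isUnit_algebraMap_sub (inv_mul_cancel₀ hr) hc),
    fun hc hd => hc (h.isUnit_algebraMap_sub (mul_inv_cancel₀ hr) hd)⟩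

theorem spectrum_real_diff_zero_eq {A : Type*} [Ring A] [Algebra ℂ A] {c d : A}
    (h : IsGroupInverse_s3 c d) :
    spectrum ℝ d \ {0} = {x : ℝ | ∃ μ ∈ spectrum ℂ c \ {0}, (x : ℂ) = 1 / μ} := by
  ext x
  simp only [Set.mem_ofPred_eq, Set.mem_sdiff, Set.mem_singleton_iff, one_div,
    ← spectrum.algebraMap_mem_iff ℂ (r := x), Complex.coe_algebraMap]
  constructor
  · rintro ⟨hx, hx0⟩
    have hx0' : (x : ℂ)⁻¹ ≠ 0 := inv_ne_zero (Complex.ofReal_ne_zero.mpr hx0)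
    exact ⟨(x : ℂ)⁻¹, ⟨(h.inv_mem_spectrum_iff hx0').mp (by rwa [inv_inv]), hx0'⟩,
      (inv_inv _).symm⟩
  · rintro ⟨μ, ⟨hμ, hμ0⟩, hx⟩
    refine ⟨hx ▸ (h.inv_mem_spectrum_iff hμ0).mpr hμ, ?_⟩
    rintro rfl
    exact hμ0 (inv_eq_zero.mp (by simpa using hx.symm))

end IsGroupInverse_s3

theorem isGroupInverse_star_mul_self_mul_star {A : Type*} [Semigroup A] [StarMul A] {a b : A}
    (h₁ : a * b * a = a) (h₂ : b * a * b = b) (h₃ : IsSelfAdjoint (a * b))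
    (h₄ : IsSelfAdjoint (b * a)) : IsGroupInverse_s3 (star a * a) (b * star b) := by
  have hab : a * b * star b = star b :=
    calc a * b * star b = star (b * (a * b)) := by rw [star_mul, h₃.star_eq]
      _ = star b := by rw [← mul_assoc, h₂]
  have hba : b * a * star a = star a :=
    calc b * a * star a = star (a * (b * a)) := by rw [star_mul, h₄.star_eq]
      _ = star a := by rw [← mul_assoc, h₁]
  have hcd : star a * a * (b * star b) = b * a := by
    rw [mul_assoc, ← mul_assoc a, hab, ← star_mul, h₄.star_eq]
  have hdc : b * star b * (star a * a) = b * a := by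
    rw [mul_assoc, ← mul_assoc (star b), ← star_mul, h₃.star_eq, h₁]
  exact ⟨hcd.trans hdc.symm, by rw [hcd, ← mul_assoc, hba], by rw [hdc, ← mul_assoc, h₂]⟩

theorem CStarAlgebra.sSup_spectrum_diff_zero_eq_norm {A : Type*} [CStarAlgebra A]
    [PartialOrder A] [StarOrderedRing A] {a : A} (ha : 0 ≤ a) :
    sSup (spectrum ℝ a \ {0}) = ‖a‖ := by
  rcases subsingleton_or_nontrivial A with _ | _
  · simp [spectrum.of_subsingleton, Subsingleton.elim a 0]
  rcases eq_or_ne a 0 with rfl | ha0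
  · simp [spectrum.zero_eq]
  · refine IsGreatest.csSup_eq ⟨⟨norm_mem_spectrum_of_nonneg ha, norm_ne_zero_iff.mpr ha0⟩, ?_⟩
    exact fun x hx => (Real.le_norm_self x).trans (spectrum.norm_le_norm_of_mem hx.1)

/-- If `b` is the Moore-Penrose inverse of `a` in a unital C*-algebra, then
`‖b‖² = sup {1/λ : λ ∈ σ(a*a) \ {0}}`. -/
theorem norm_moore_penrose_inverse_sq {A : Type*} [CStarAlgebra A] (a b : A)
    (hb : a * b * a = a ∧ b * a * b = b ∧
      star (a * b) = a * b ∧ star (b * a) = b * a) :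
    ‖b‖ ^ 2 = sSup {x : ℝ | ∃ μ ∈ spectrum ℂ (star a * a) \ {0}, (x : ℂ) = 1 / μ} := by
  obtain ⟨h₁, h₂, h₃, h₄⟩ := hb
  let _ := CStarAlgebra.spectralOrder A
  let _ := CStarAlgebra.spectralOrderedRing A
  rw [← (isGroupInverse_star_mul_self_mul_star h₁ h₂ h₃ h₄).spectrum_real_diff_zero_eq,
    CStarAlgebra.sSup_spectrum_diff_zero_eq_norm (mul_star_self_nonneg b), sq,
    CStarRing.norm_self_mul_star]
end

section
/- Let C be a unital C*-subalgebra of a unital C*-algebra B (with the same identity). If c ∈ C is Moore-Penrose invertible in B, then its Moore-Penrose inverse c† belongs to C (inverse closedness of Moore-Penrose invertibility). -/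
/-!
With `a = c⋆c ≥ 0`, the Moore–Penrose identities give `c⋆ = a b` and `b = a w` for
`w = b b⋆ b`. The elements `(a + ε)⁻¹ c⋆`, formed by continuous functional calculus, lie in
`C` because `C` is closed, and they equal `(a + ε)⁻¹ a² w`. Since `s ↦ s²/(s + ε)` is within
`ε` of the identity on `[0, ∞)`, they converge to `a w = b` as `ε → 0⁺`.
-/

open Filter Topology

structure IsMoorePenroseInverse_s4 {R : Type*} [Monoid R] [StarMul R] (c b : R) : Prop where
  mul_mul_self : c * b * c = c
  mul_mul_self' : b * c * b = b
  isSelfAdjoint_mul : IsSelfAdjoint (c * b)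
  isSelfAdjoint_mul' : IsSelfAdjoint (b * c)

namespace IsMoorePenroseInverse_s4

variable {R : Type*} [Monoid R] [StarMul R] {c b : R}

lemma star_mul_self_mul (h : IsMoorePenroseInverse_s4 c b) : star c * c * b = star c := by
  rw [mul_assoc, ← h.isSelfAdjoint_mul.star_eq, ← star_mul, h.mul_mul_self]

lemma star_mul_self_mul_mul_star_mul (h : IsMoorePenroseInverse_s4 c b) :
    star c * c * (b * star b * b) = b := by
  calc star c * c * (b * star b * b) = star c * c * b * star b * b := by simp only [mul_assoc]
    _ = star (b * c) * b := by rw [h.star_mul_self_mul, star_mul]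
    _ = b := by rw [h.isSelfAdjoint_mul'.star_eq, h.mul_mul_self']

end IsMoorePenroseInverse_s4

section CStarAlgebra

variable {A : Type*} [CStarAlgebra A]

lemma norm_cfc_inv_add_mul_mul_self_sub_le {a : A} (ha : IsSelfAdjoint a)
    (hspec : ∀ s ∈ spectrum ℝ a, 0 ≤ s) {ε : ℝ} (hε : 0 < ε) :
    ‖cfc (fun s : ℝ => (s + ε)⁻¹) a * a * a - a‖ ≤ ε := by
  have hcont : ContinuousOn (fun s : ℝ => (s + ε)⁻¹) (spectrum ℝ a) :=
    ContinuousOn.inv₀ (by fun_prop) fun s hs => by linarith [hspec s hs]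
  have hcfc : cfc (fun s : ℝ => (s + ε)⁻¹) a * a * a - a =
      cfc (fun s : ℝ => (s + ε)⁻¹ * s * s - s) a := by
    rw [cfc_sub _ _ a, cfc_mul _ _ a, cfc_mul _ _ a hcont, cfc_id' ℝ a]
  rw [hcfc]
  refine norm_cfc_le hε.le fun s hs => ?_
  have hs0 := hspec s hs
  have hsε : 0 < s + ε := by linarith
  rw [Real.norm_eq_abs, abs_le]
  constructor <;> field_simp <;> nlinarith

lemma tendsto_cfc_inv_add_mul_mul_self {a : A} (ha : IsSelfAdjoint a)
    (hspec : ∀ s ∈ spectrum ℝ a, 0 ≤ s) :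
    Tendsto (fun ε : ℝ => cfc (fun s : ℝ => (s + ε)⁻¹) a * a * a) (𝓝[>] 0) (𝓝 a) := by
  rw [tendsto_iff_norm_sub_tendsto_zero]
  refine squeeze_zero' (.of_forall fun _ => norm_nonneg _) ?_
    (tendsto_nhdsWithin_of_tendsto_nhds tendsto_id)
  filter_upwards [self_mem_nhdsWithin] with ε hε
  exact norm_cfc_inv_add_mul_mul_self_sub_le ha hspec hε

end CStarAlgebra

/-- Inverse closedness of Moore-Penrose invertibility: if `c` lies in a unital
C*-subalgebra `C` of `B` and is Moore-Penrose invertible in `B`, then its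
Moore-Penrose inverse lies in `C`. -/
theorem moore_penrose_inverse_mem_starSubalgebra {B : Type*} [CStarAlgebra B]
    (C : StarSubalgebra ℂ B) (hC : IsClosed (C : Set B))
    (c : B) (hc : c ∈ C) (b : B)
    (hb : c * b * c = c ∧ b * c * b = b ∧
      star (c * b) = c * b ∧ star (b * c) = b * c) :
    b ∈ C := by
  have hmp : IsMoorePenroseInverse_s4 c b := ⟨hb.1, hb.2.1, hb.2.2.1, hb.2.2.2⟩
  set a := star c * c
  have ha : a ∈ C := mul_mem (star_mem hc) hc
  have hlim : Tendsto (fun ε : ℝ => cfc (fun s : ℝ => (s + ε)⁻¹) a * star c) (𝓝[>] 0) (𝓝 b) := by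
    have := (tendsto_cfc_inv_add_mul_mul_self (.star_mul_self c)
      spectrum_star_mul_self_nonneg).mul_const (b * star b * b)
    rw [hmp.star_mul_self_mul_mul_star_mul] at this
    refine this.congr fun ε => ?_
    rw [mul_assoc _ a, hmp.star_mul_self_mul_mul_star_mul, mul_assoc, hmp.star_mul_self_mul]
  exact hC.mem_of_tendsto hlim (.of_forall fun _ =>
    mul_mem (cfc_mem (hs := hC) _ ha) (star_mem hc))
end

section
/- Let J₁, J₂ be two-sided ideals in a unital algebra A. If a ∈ A is generalized invertible modulo J₁ (there is b with aba − a ∈ J₁) and left invertible modulo J₂ (there is c with e − ca ∈ J₂), then a is generalized invertible modulo J₁ ∩ J₂, i.e. there exists d ∈ A with ada − a ∈ J₁ ∩ J₂. -/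
theorem mul_add_sub_mul_mul_mul_sub_self {R : Type*} [Ring R] (a b c : R) :
    a * (b + c - b * a * c) * a - a = (a * b * a - a) * (1 - c * a) := by
  noncomm_ring

/-- If `a` is generalized invertible modulo the two-sided ideal `J₁` and left
invertible modulo the two-sided ideal `J₂`, then `a` is generalized invertible
modulo `J₁ ∩ J₂`. -/
theorem generalized_invertible_mod_inter {A : Type*} [Ring A]
    (J₁ J₂ : TwoSidedIdeal A) (a : A)
    (h₁ : ∃ b : A, a * b * a - a ∈ J₁)
    (h₂ : ∃ c : A, 1 - c * a ∈ J₂) :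
    ∃ d : A, a * d * a - a ∈ J₁ ∧ a * d * a - a ∈ J₂ := by
  obtain ⟨b, hb⟩ := h₁
  obtain ⟨c, hc⟩ := h₂
  refine ⟨b + c - b * a * c, ?_, ?_⟩ <;> rw [mul_add_sub_mul_mul_mul_sub_self]
  · exact J₁.mul_mem_right _ _ hb
  · exact J₂.mul_mem_left _ _ hc
end

section
/- Let J be a closed ideal of a C*-algebra A and let k ∈ J be a nonzero element of algebraic rank one in J (for every j ∈ J there is α ∈ ℂ with kjk = αk). Then k is of algebraic rank one in A: for every a ∈ A there is μ ∈ ℂ with kak = μk. -/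
/-!
With `f_ε t = t² / (t² + ε⁴)`, the element `x * f_ε (x⋆x)` is within `ε` of `x`, since
`‖x - x f_ε(x⋆x)‖²` is the sup of `|t| (1 - f_ε t)²` over the spectrum, and `f_ε (x⋆x)` lies in
every ideal containing `x` because `f_ε t = t · t / (t² + ε⁴)`; symmetrically on the left with
`x x⋆`. So `k` is a limit of `k e` and of `e k` with `e ∈ J`, and `k a k` is a limit of the
elements `k (e a e') k`, which lie in the closed line `ℂ k`.
-/

section

variable {A : Type*} [NonUnitalCStarAlgebra A]

lemma abs_mul_one_sub_sq_div_sq_add_sq_le {ε : ℝ} (hε : 0 < ε) (t : ℝ) :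
    |t| * (1 - t ^ 2 / (t ^ 2 + ε ^ 4)) ^ 2 ≤ ε ^ 2 := by
  have hd : 0 < t ^ 2 + ε ^ 4 := by positivity
  have h1 : 1 - t ^ 2 / (t ^ 2 + ε ^ 4) = ε ^ 4 / (t ^ 2 + ε ^ 4) := by field_simp; ring
  rw [h1, div_pow, mul_div_assoc', div_le_iff₀ (by positivity)]
  have hamgm : 2 * |t| * ε ^ 2 ≤ t ^ 2 + ε ^ 4 := by
    nlinarith [sq_nonneg (|t| - ε ^ 2), sq_abs t]
  have hge : ε ^ 4 ≤ t ^ 2 + ε ^ 4 := by nlinarith [sq_nonneg t]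
  calc |t| * (ε ^ 4) ^ 2 ≤ ε ^ 2 * ((2 * |t| * ε ^ 2) * ε ^ 4) := by
        nlinarith [abs_nonneg t, pow_pos hε 8]
    _ ≤ ε ^ 2 * ((t ^ 2 + ε ^ 4) * (t ^ 2 + ε ^ 4)) := by gcongr
    _ = ε ^ 2 * (t ^ 2 + ε ^ 4) ^ 2 := by ring

lemma star_mul_self_sub_mul_cfcₙ (x : A) {f : ℝ → ℝ} (hf : Continuous f) (hf0 : f 0 = 0) :
    star (x - x * cfcₙ f (star x * x)) * (x - x * cfcₙ f (star x * x)) =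
      cfcₙ (fun t => t * (1 - f t) ^ 2) (star x * x) := by
  set b := star x * x
  set e := cfcₙ f b
  have hb : IsSelfAdjoint b := .star_mul_self x
  have he : star e = e := (cfcₙ_predicate f b).star_eq
  have hbe : b - b * e = cfcₙ (fun t => t - t * f t) b := by
    rw [cfcₙ_sub _ _ b, cfcₙ_mul _ f b, cfcₙ_id' ℝ b]
  calc star (x - x * e) * (x - x * e) = (b - b * e) - e * (b - b * e) := by
        simp only [b, star_sub, star_mul, he]; noncomm_ring
    _ = cfcₙ (fun t => (t - t * f t) - f t * (t - t * f t)) b := by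
        rw [hbe, ← cfcₙ_mul f _ b, ← cfcₙ_sub _ _ b]
    _ = cfcₙ (fun t => t * (1 - f t) ^ 2) b := cfcₙ_congr fun t _ => by ring

lemma norm_sub_mul_cfcₙ_sq_le (x : A) {f : ℝ → ℝ} (hf : Continuous f) (hf0 : f 0 = 0) {c : ℝ}
    (hc : ∀ t, |t| * (1 - f t) ^ 2 ≤ c) :
    ‖x - x * cfcₙ f (star x * x)‖ ^ 2 ≤ c := by
  rw [sq, ← CStarRing.norm_star_mul_self, star_mul_self_sub_mul_cfcₙ x hf hf0]
  refine norm_cfcₙ_le fun t _ => ?_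
  simpa [abs_mul] using hc t

lemma norm_sub_mul_cfcₙ_le (x : A) {ε : ℝ} (hε : 0 < ε) :
    ‖x - x * cfcₙ (fun t : ℝ => t ^ 2 / (t ^ 2 + ε ^ 4)) (star x * x)‖ ≤ ε := by
  refine (pow_le_pow_iff_left₀ (norm_nonneg _) hε.le two_ne_zero).1 ?_
  exact norm_sub_mul_cfcₙ_sq_le x (by fun_prop (disch := intro; positivity)) (by simp)
    (abs_mul_one_sub_sq_div_sq_add_sq_le hε)

lemma norm_sub_cfcₙ_mul_le (x : A) {ε : ℝ} (hε : 0 < ε) :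
    ‖x - cfcₙ (fun t : ℝ => t ^ 2 / (t ^ 2 + ε ^ 4)) (x * star x) * x‖ ≤ ε := by
  have he := (cfcₙ_predicate (fun t : ℝ => t ^ 2 / (t ^ 2 + ε ^ 4)) (x * star x)).star_eq
  simpa [← norm_star (x - _), he] using norm_sub_mul_cfcₙ_le (star x) hε

lemma TwoSidedIdeal.cfcₙ_sq_div_sq_add_mem (J : TwoSidedIdeal A) {b : A} (hbJ : b ∈ J)
    (hb : IsSelfAdjoint b) {η : ℝ} (hη : 0 < η) :
    cfcₙ (fun t : ℝ => t ^ 2 / (t ^ 2 + η)) b ∈ J := by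
  have hcont : Continuous fun t : ℝ => t / (t ^ 2 + η) := by
    fun_prop (disch := intro; positivity)
  rw [show (fun t : ℝ => t ^ 2 / (t ^ 2 + η)) = fun t => t * (t / (t ^ 2 + η)) by ext; ring,
    cfcₙ_mul _ _ b (hg := hcont.continuousOn), cfcₙ_id' ℝ b]
  exact J.mul_mem_right _ _ hbJ

lemma TwoSidedIdeal.mem_closure_mul_left_image (J : TwoSidedIdeal A) {x : A} (hx : x ∈ J) :
    x ∈ closure ((x * ·) '' J) := by
  refine Metric.mem_closure_iff.2 fun ε hε => ⟨_, ⟨_, J.cfcₙ_sq_div_sq_add_mem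
    (J.mul_mem_left _ _ hx) (.star_mul_self x) (η := (ε / 2) ^ 4) (by positivity), rfl⟩, ?_⟩
  rw [dist_eq_norm]
  exact (norm_sub_mul_cfcₙ_le x (half_pos hε)).trans_lt (half_lt_self hε)

lemma TwoSidedIdeal.mem_closure_mul_right_image (J : TwoSidedIdeal A) {x : A} (hx : x ∈ J) :
    x ∈ closure ((· * x) '' J) := by
  refine Metric.mem_closure_iff.2 fun ε hε => ⟨_, ⟨_, J.cfcₙ_sq_div_sq_add_mem
    (J.mul_mem_right _ _ hx) (.mul_star_self x) (η := (ε / 2) ^ 4) (by positivity), rfl⟩, ?_⟩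
  rw [dist_eq_norm]
  exact (norm_sub_cfcₙ_mul_le x (half_pos hε)).trans_lt (half_lt_self hε)

end

theorem algebraic_rank_one_in_ideal_to_algebra_general {A : Type*} [NonUnitalCStarAlgebra A]
    (J : TwoSidedIdeal A)
    (k : A) (hk : k ∈ J)
    (h : ∀ j ∈ J, ∃ α : ℂ, k * j * k = α • k) :
    ∀ a : A, ∃ μ : ℂ, k * a * k = μ • k := by
  intro a
  set V := Submodule.span ℂ {k}
  have hV : IsClosed (V : Set A) := Submodule.closed_of_finiteDimensional V
  have hsandwich : ∀ e ∈ J, ∀ e' ∈ J, k * e * a * (e' * k) ∈ V := by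
    intro e he e' he'
    obtain ⟨α, hα⟩ := h (e * a * e') (J.mul_mem_right _ _ (J.mul_mem_right _ _ he))
    rw [show k * e * a * (e' * k) = k * (e * a * e') * k by simp only [mul_assoc], hα]
    exact V.smul_mem α (Submodule.mem_span_singleton_self k)
  have hkJ : ∀ e' ∈ J, k * a * (e' * k) ∈ V := by
    intro e' he'
    change k ∈ (· * a * (e' * k)) ⁻¹' V
    refine closure_minimal ?_ (hV.preimage (by fun_prop))
      (J.mem_closure_mul_left_image hk)
    rintro _ ⟨e, he, rfl⟩
    exact hsandwich e he e' he'
  have hkk : k * a * k ∈ V := by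
    change k ∈ (k * a * ·) ⁻¹' V
    refine closure_minimal ?_ (hV.preimage (by fun_prop))
      (J.mem_closure_mul_right_image hk)
    rintro _ ⟨e', he', rfl⟩
    exact hkJ e' he'
  obtain ⟨μ, hμ⟩ := Submodule.mem_span_singleton.1 hkk
  exact ⟨μ, hμ.symm⟩

/-- If `k` is a nonzero element of algebraic rank one in a closed ideal `J` of a
C*-algebra `A`, then `k` has algebraic rank one in `A`. -/
theorem algebraic_rank_one_in_ideal_to_algebra {A : Type*} [NonUnitalCStarAlgebra A]
    (J : TwoSidedIdeal A) (hJ : IsClosed (J : Set A))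
    (k : A) (hk : k ∈ J) (hk0 : k ≠ 0)
    (h : ∀ j ∈ J, ∃ α : ℂ, k * j * k = α • k) :
    ∀ a : A, ∃ μ : ℂ, k * a * k = μ • k :=
  algebraic_rank_one_in_ideal_to_algebra_general J k hk h
end

section
/- Let J be a closed ideal of a unital C*-algebra with the compact spectral property, and let q ∈ J be a nonzero projection. Then every strictly decreasing chain q = q₀ > q₁ > q₂ > … of projections below q is finite. -/
/-!
The differences `p n = q n - q (n + 1)` of the chain are nonzero, pairwise orthogonal
projections in `J`. With `b = ∑ 2⁻ⁿ • p n` (norm convergent, hence in the closed ideal `J`),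
the self-adjoint element `q 0 - b ∈ J` acts on `p n` as multiplication by `1 - 2⁻ⁿ`,
so these numbers lie in its spectrum and accumulate at `1 ≠ 0`.
-/

/-- An ideal `J` of a unital C*-algebra has the *compact spectral property* if
every self-adjoint element of `J` has `0` as its only possible accumulation
point of its spectrum. -/
def CompactSpectralProperty {A : Type*} [CStarAlgebra A] (J : TwoSidedIdeal A) : Prop :=
  ∀ a ∈ J, IsSelfAdjoint a → ∀ μ : ℂ, μ ≠ 0 → ¬ AccPt μ (Filter.principal (spectrum ℂ a))

open Filter Topology

section ProjectionChain

variable {R : Type*} {q : ℕ → R}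

theorem mul_eq_right_of_le [Semigroup R] (hq : ∀ n, IsIdempotentElem (q n))
    (hleft : ∀ n, q n * q (n + 1) = q (n + 1)) {m n : ℕ} (hmn : m ≤ n) :
    q m * q n = q n := by
  induction n, hmn using Nat.le_induction with
  | base => exact hq m
  | succ n _ ih => rw [← hleft n, ← mul_assoc, ih]

theorem mul_eq_left_of_le [Semigroup R] (hq : ∀ n, IsIdempotentElem (q n))
    (hright : ∀ n, q (n + 1) * q n = q (n + 1)) {m n : ℕ} (hmn : m ≤ n) :
    q n * q m = q n := by
  induction n, hmn using Nat.le_induction with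
  | base => exact hq m
  | succ n _ ih => rw [← hright n, mul_assoc, ih]

theorem pairwise_sub_succ_mul_sub_succ_eq_zero [NonUnitalRing R]
    (hq : ∀ n, IsIdempotentElem (q n)) (hleft : ∀ n, q n * q (n + 1) = q (n + 1))
    (hright : ∀ n, q (n + 1) * q n = q (n + 1)) :
    Pairwise fun m n => (q m - q (m + 1)) * (q n - q (n + 1)) = 0 := by
  intro m n hmn
  rcases hmn.lt_or_gt with h | h
  · rw [sub_mul, mul_sub, mul_sub, mul_eq_right_of_le hq hleft h.le,
      mul_eq_right_of_le hq hleft (n := n + 1) (by omega),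
      mul_eq_right_of_le hq hleft (m := m + 1) (n := n) h,
      mul_eq_right_of_le hq hleft (m := m + 1) (n := n + 1) (by omega), sub_self]
  · rw [sub_mul, mul_sub, mul_sub, mul_eq_left_of_le hq hright h.le,
      mul_eq_left_of_le hq hright (m := n + 1) (n := m) h,
      mul_eq_left_of_le hq hright (m := n) (n := m + 1) (by omega),
      mul_eq_left_of_le hq hright (m := n + 1) (n := m + 1) (by omega), sub_self, sub_self,
      sub_self]

theorem TwoSidedIdeal.mem_of_chain [NonUnitalNonAssocRing R] {J : TwoSidedIdeal R}
    (hq0 : q 0 ∈ J) (hright : ∀ n, q (n + 1) * q n = q (n + 1)) (n : ℕ) : q n ∈ J := by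
  induction n with
  | zero => exact hq0
  | succ n ih => exact hright n ▸ J.mul_mem_left _ _ ih

end ProjectionChain

theorem mem_spectrum_of_mul_eq_smul {R A : Type*} [CommSemiring R] [Ring A] [Algebra R A]
    {a p : A} {μ : R} (hp : p ≠ 0) (h : a * p = μ • p) : μ ∈ spectrum R a := by
  intro hunit
  refine hp ((hunit.mul_right_eq_zero).mp ?_)
  rw [sub_mul, Algebra.algebraMap_eq_smul_one, smul_one_mul, h, sub_self]

theorem tsum_smul_mul_of_pairwise_mul_eq_zero {R A : Type*} [Semiring R] [Ring A]
    [TopologicalSpace A] [IsTopologicalSemiring A] [T2Space A] [Module R A]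
    [IsScalarTower R A A] {c : ℕ → R} {p : ℕ → A} (hsum : Summable fun n => c n • p n)
    (hp : ∀ n, IsIdempotentElem (p n)) (horth : Pairwise fun m n => p m * p n = 0) (m : ℕ) :
    (∑' n, c n • p n) * p m = c m • p m := by
  rw [← hsum.tsum_mul_right, tsum_eq_single m fun n hnm => by
    rw [smul_mul_assoc, horth hnm, smul_zero], smul_mul_assoc, (hp m).eq]

theorem accPt_of_tendsto {ι X : Type*} [TopologicalSpace X] {l : Filter ι} [l.NeBot]
    {x : ι → X} {μ : X} {S : Set X} (hx : Tendsto x l (𝓝 μ)) (hne : ∀ n, x n ≠ μ) (hmem : ∀ n, x n ∈ S) :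
    AccPt μ (𝓟 S) :=
  accPt_iff_frequently.mpr (hx.frequently (Frequently.of_forall fun n => ⟨hne n, hmem n⟩))

theorem no_infinite_chain_of_projections_general {A : Type*} [CStarAlgebra A]
    (J : TwoSidedIdeal A) (hJc : IsClosed (J : Set A))
    (hJ : CompactSpectralProperty J)
    (q : ℕ → A) (hq0 : q 0 ∈ J)
    (hproj : ∀ n, star (q n) = q n ∧ q n * q n = q n)
    (hchain : ∀ n, q n * q (n + 1) = q (n + 1) ∧ q (n + 1) * q n = q (n + 1))
    (hne : ∀ n, q (n + 1) ≠ q n) : False := by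
  have hidem n : IsIdempotentElem (q n) := (hproj n).2
  have hleft n := (hchain n).1
  have hright n := (hchain n).2
  set p : ℕ → A := fun n => q n - q (n + 1)
  have hp n : IsStarProjection (p n) := IsStarProjection.sub_of_mul_eq_right
    ⟨hidem (n + 1), (hproj (n + 1)).1⟩ ⟨hidem n, (hproj n).1⟩ (hleft n)
  have hq0p n : q 0 * p n = p n := by
    rw [mul_sub, mul_eq_right_of_le hidem hleft n.zero_le,
      mul_eq_right_of_le hidem hleft (n + 1).zero_le]
  have hqJ := TwoSidedIdeal.mem_of_chain hq0 hright
  set c : ℕ → ℂ := fun n => 2⁻¹ ^ n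
  have hsum : Summable fun n => c n • p n := by
    refine .of_norm_bounded (summable_geometric_of_lt_one (r := 2⁻¹) (by norm_num) (by norm_num))
      fun n => (norm_smul_le _ _).trans ?_
    simpa [c] using (hp n).norm_le
  set a := q 0 - ∑' n, c n • p n
  have haJ : a ∈ J := J.sub_mem hq0 <| tsum_mem hJc fun n => by
    rw [Algebra.smul_def]; exact J.mul_mem_left _ _ (J.sub_mem (hqJ n) (hqJ (n + 1)))
  have ha : IsSelfAdjoint a := IsSelfAdjoint.sub (hproj 0).1 <| by
    simp only [IsSelfAdjoint, tsum_star, star_smul, (hp _).isSelfAdjoint.star_eq, c, star_pow,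
      star_inv₀, star_ofNat]
  have hspec n : 1 - c n ∈ spectrum ℂ a := by
    refine mem_spectrum_of_mul_eq_smul (sub_ne_zero.mpr (hne n).symm) ?_
    rw [sub_mul, hq0p, tsum_smul_mul_of_pairwise_mul_eq_zero hsum (fun n => (hp n).isIdempotentElem)
      (pairwise_sub_succ_mul_sub_succ_eq_zero hidem hleft hright), sub_smul, one_smul]
  have htends : Tendsto (fun n => 1 - c n) atTop (𝓝 1) := by
    simpa [c] using tendsto_const_nhds.sub
      (tendsto_pow_atTop_nhds_zero_of_norm_lt_one (x := (2⁻¹ : ℂ)) (by norm_num))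
  exact hJ a haJ ha 1 one_ne_zero <| accPt_of_tendsto htends (by simp [c]) hspec

/-- In a closed ideal with the compact spectral property there is no infinite
strictly decreasing chain of projections starting at a nonzero projection. -/
theorem no_infinite_chain_of_projections {A : Type*} [CStarAlgebra A]
    (J : TwoSidedIdeal A) (hJc : IsClosed (J : Set A))
    (hJ : CompactSpectralProperty J)
    (q : ℕ → A) (hq0 : q 0 ∈ J) (hq0ne : q 0 ≠ 0)
    (hproj : ∀ n, star (q n) = q n ∧ q n * q n = q n)
    (hchain : ∀ n, q n * q (n + 1) = q (n + 1) ∧ q (n + 1) * q n = q (n + 1))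
    (hne : ∀ n, q (n + 1) ≠ q n) : False :=
  no_infinite_chain_of_projections_general J hJc hJ q hq0 hproj hchain hne
end

section
/- Let J be a closed ideal with the compact spectral property of a unital C*-algebra, and let q ∈ J be a nonzero projection. Then q is a finite sum of minimal projections in J. -/
/-- `p` is a minimal projection in the ideal `J`. -/
def IsMinimalProjection {A : Type*} [CStarAlgebra A] (J : TwoSidedIdeal A) (p : A) : Prop :=
  p ∈ J ∧ star p = p ∧ p * p = p ∧ p ≠ 0 ∧
    ∀ r ∈ J, star r = r → r * r = r → r * p = r → p * r = r → r ≠ 0 → r = p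

/-!
If some projection of `J` were not a finite sum of minimal projections, splitting it again and
again would give a strictly decreasing sequence `f n` of projections in `J`, whose differences
`e n = f n - f (n + 1)` are nonzero, pairwise orthogonal and lie below `f 0`. The self-adjoint
element `f 0 + ∑ 2⁻ⁿ e n` of the closed ideal `J` has the eigenvalues `1 + 2⁻ⁿ`, so `1` would be
an accumulation point of its spectrum. Hence strict descent among projections of `J` is
well founded, and well-founded induction splits every projection into minimal ones.
-/

open Filter Topology

theorem spectrum.mem_of_mul_eq_smul {R B : Type*} [CommSemiring R] [Ring B] [Algebra R B]
    {a e : B} {r : R} (he : e ≠ 0) (h : a * e = r • e) : r ∈ spectrum R a := by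
  refine spectrum.mem_iff.mpr fun hu ↦ he ?_
  rw [← hu.mul_right_eq_zero, sub_mul, Algebra.algebraMap_eq_smul_one, smul_one_mul, h, sub_self]

theorem HasSum.mul_eq_smul_of_pairwise_mul_eq_zero {ι R B : Type*} [Semiring R]
    [NonUnitalNonAssocSemiring B] [Module R B] [IsScalarTower R B B] [TopologicalSpace B]
    [IsTopologicalSemiring B] [T2Space B] {c : ι → R} {e : ι → B} {a : B}
    (ha : HasSum (fun i ↦ c i • e i) a) (horth : Pairwise fun i j ↦ e i * e j = 0) {k : ι}
    (hk : IsIdempotentElem (e k)) : a * e k = c k • e k := by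
  have := (ha.mul_right (e k)).unique <| hasSum_single k fun i hi ↦ by
    rw [smul_mul_assoc, horth hi, smul_zero]
  rwa [smul_mul_assoc, hk.eq] at this

section CStarAlgebra

variable {A : Type*} [CStarAlgebra A]

section Order

variable [PartialOrder A] [StarOrderedRing A]

theorem IsStarProjection.pairwise_sub_succ_mul_eq_zero {S : ℕ → A}
    (hS : ∀ n, IsStarProjection (S n)) (hanti : Antitone S) :
    Pairwise fun m n ↦ (S m - S (m + 1)) * (S n - S (n + 1)) = 0 := by
  have hproj n : IsStarProjection (S n - S (n + 1)) :=
    ((hS _).le_iff_sub (hS n)).mp (hanti n.le_succ)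
  have hle {m n} (h : m < n) : S n - S (n + 1) ≤ S (m + 1) :=
    (sub_le_self _ (hS _).nonneg).trans (hanti h)
  intro m n hmn
  rcases hmn.lt_or_gt with h | h
  · have h₁ := ((hproj n).le_iff_mul_eq_right (hS _)).mp (hle h)
    have h₀ := ((hproj n).le_iff_mul_eq_right (hS _)).mp ((hle h).trans (hanti m.le_succ))
    rw [sub_mul, h₀, h₁, sub_self]
  · have h₁ := ((hproj m).le_iff_mul_eq_left (hS _)).mp (hle h)
    have h₀ := ((hproj m).le_iff_mul_eq_left (hS _)).mp ((hle h).trans (hanti n.le_succ))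
    rw [mul_sub, h₀, h₁, sub_self]

theorem exists_lt_of_not_isMinimalProjection {J : TwoSidedIdeal A} {p : A} (hpJ : p ∈ J)
    (hp : IsStarProjection p) (hp0 : p ≠ 0) (hmin : ¬ IsMinimalProjection J p) :
    ∃ r ∈ J, IsStarProjection r ∧ r ≠ 0 ∧ r < p := by
  simp only [IsMinimalProjection, not_and, not_forall] at hmin
  obtain ⟨r, hrJ, hrsa, hridem, hrp, -, hr0, hne⟩ :=
    hmin hpJ hp.isSelfAdjoint hp.isIdempotentElem hp0
  have hr : IsStarProjection r := ⟨hridem, hrsa⟩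
  exact ⟨r, hrJ, hr, hr0, lt_of_le_of_ne ((hr.le_iff_mul_eq_left hp).mpr hrp) hne⟩

end Order

namespace CompactSpectralProperty

variable {J : TwoSidedIdeal A}

theorem exists_eq_zero_of_pairwise_mul_eq_zero (hJc : IsClosed (J : Set A))
    (hJ : CompactSpectralProperty J) {q : A} (hqJ : q ∈ J) (hq : IsSelfAdjoint q) {e : ℕ → A}
    (heJ : ∀ n, e n ∈ J) (he : ∀ n, IsStarProjection (e n)) (hqe : ∀ n, q * e n = e n)
    (horth : Pairwise fun m n ↦ e m * e n = 0) : ∃ n, e n = 0 := by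
  by_contra! he0
  set c : ℕ → ℂ := fun n ↦ 2⁻¹ ^ n
  have hsum : Summable fun n ↦ c n • e n := by
    refine .of_norm_bounded summable_geometric_two fun n ↦ ?_
    grw [norm_smul_le, IsStarProjection.norm_le _ (he n)]
    simp [c]
  set b := q + ∑' n, c n • e n
  have hbJ : b ∈ J := J.add_mem hqJ <| hJc.mem_of_tendsto hsum.hasSum <|
    .of_forall fun s ↦ sum_mem fun n _ ↦ by rw [Algebra.smul_def]; exact J.mul_mem_left _ _ (heJ n)
  have hb : IsSelfAdjoint b := hq.add <| by
    simp [IsSelfAdjoint, tsum_star, c, (he _).isSelfAdjoint.star_eq]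
  have hspec n : 1 + c n ∈ spectrum ℂ b := by
    refine spectrum.mem_of_mul_eq_smul (he0 n) ?_
    rw [add_mul, hqe, hsum.hasSum.mul_eq_smul_of_pairwise_mul_eq_zero horth (he n).isIdempotentElem,
      add_smul, one_smul]
  have hlim : Tendsto (fun n ↦ 1 + c n) atTop (𝓝 1) := by
    simpa only [add_zero] using (tendsto_pow_atTop_nhds_zero_of_norm_lt_one
      (show ‖(2⁻¹ : ℂ)‖ < 1 by norm_num)).const_add 1
  refine hJ b hbJ hb 1 one_ne_zero <| accPt_iff_frequently.mpr <|
    hlim.frequently <| .of_forall fun n ↦ ⟨by simp [c], hspec n⟩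

variable [PartialOrder A] [StarOrderedRing A]

theorem wellFoundedOn_lt (hJc : IsClosed (J : Set A)) (hJ : CompactSpectralProperty J) :
    {p : A | p ∈ J ∧ IsStarProjection p}.WellFoundedOn (· < ·) := by
  refine Set.wellFoundedOn_iff_no_descending_seq.mpr fun f hf ↦ ?_
  have hanti : StrictAnti f := fun _ _ h ↦ f.map_rel_iff.mpr h
  have hproj n : IsStarProjection (f n - f (n + 1)) :=
    ((hf _).2.le_iff_sub (hf n).2).mp (hanti n.lt_succ_self).le
  have hle n : f n - f (n + 1) ≤ f 0 :=
    (sub_le_self _ (hf _).2.nonneg).trans (hanti.antitone n.zero_le)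
  obtain ⟨n, hn⟩ := exists_eq_zero_of_pairwise_mul_eq_zero hJc hJ (hf 0).1 (hf 0).2.isSelfAdjoint
    (fun n ↦ J.sub_mem (hf n).1 (hf _).1) hproj
    (fun n ↦ ((hproj n).le_iff_mul_eq_right (hf 0).2).mp (hle n))
    (IsStarProjection.pairwise_sub_succ_mul_eq_zero (fun n ↦ (hf n).2) hanti.antitone)
  exact (hanti n.lt_succ_self).ne' (sub_eq_zero.mp hn)

theorem mem_closure_isMinimalProjection (hJc : IsClosed (J : Set A))
    (hJ : CompactSpectralProperty J) {p : A} (hpJ : p ∈ J) (hp : IsStarProjection p) :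
    p ∈ AddSubmonoid.closure {p | IsMinimalProjection J p} := by
  refine (wellFoundedOn_lt hJc hJ).induction ⟨hpJ, hp⟩ fun p ⟨hpJ, hp⟩ ih ↦ ?_
  by_cases hp0 : p = 0
  · exact hp0 ▸ zero_mem _
  by_cases hmin : IsMinimalProjection J p
  · exact AddSubmonoid.subset_closure hmin
  obtain ⟨r, hrJ, hr, hr0, hrp⟩ := exists_lt_of_not_isMinimalProjection hpJ hp hp0 hmin
  rw [← add_sub_cancel r p]
  exact add_mem (ih r ⟨hrJ, hr⟩ hrp) (ih (p - r) ⟨J.sub_mem hpJ hrJ, (hr.le_iff_sub hp).mp hrp.le⟩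
    (sub_lt_self p (hr.nonneg.lt_of_ne' hr0)))

end CompactSpectralProperty

end CStarAlgebra

theorem projection_eq_sum_minimal_projections_general {A : Type*} [CStarAlgebra A]
    (J : TwoSidedIdeal A) (hJc : IsClosed (J : Set A))
    (hJ : CompactSpectralProperty J)
    (q : A) (hq : q ∈ J) (hqsa : star q = q) (hqidem : q * q = q) :
    ∃ (n : ℕ) (p : Fin n → A), (∀ i, IsMinimalProjection J (p i)) ∧ q = ∑ i, p i := by
  -- projections are compared in the C⋆-order, which is not a global instance
  let _ := CStarAlgebra.spectralOrder A
  have := CStarAlgebra.spectralOrderedRing A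
  obtain ⟨l, hl, rfl⟩ := AddSubmonoid.exists_list_of_mem_closure <|
    hJ.mem_closure_isMinimalProjection hJc hq ⟨hqidem, hqsa⟩
  exact ⟨l.length, fun i ↦ l[i], fun i ↦ hl _ (List.getElem_mem _), (Fin.sum_univ_getElem l).symm⟩

/-- In a closed ideal with the compact spectral property, every nonzero
projection is a finite sum of minimal projections. -/
theorem projection_eq_sum_minimal_projections {A : Type*} [CStarAlgebra A]
    (J : TwoSidedIdeal A) (hJc : IsClosed (J : Set A))
    (hJ : CompactSpectralProperty J)
    (q : A) (hq : q ∈ J) (hqsa : star q = q) (hqidem : q * q = q) (hq0 : q ≠ 0) :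
    ∃ (n : ℕ) (p : Fin n → A), (∀ i, IsMinimalProjection J (p i)) ∧ q = ∑ i, p i :=
  projection_eq_sum_minimal_projections_general J hJc hJ q hq hqsa hqidem
end

section
/- Every Moore-Penrose ideal of a unital C*-algebra has the compact spectral property: if J is a proper closed ideal such that every element of A invertible modulo J is Moore-Penrose invertible in A, then every self-adjoint element of J has 0 as only possible accumulation point of its spectrum. -/
/-!
For `μ ≠ 0` and `a ∈ J`, the element `b = a - μ` is invertible modulo `J` (with inverse `-μ⁻¹`),
so it has a Moore-Penrose inverse `b'`; when `μ` lies in the spectrum of the self-adjoint `a` it is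
real and `b` is self-adjoint. Then `e = b b'` is a projection with `e b = b e = b`, and
`b + 1 - e` is invertible. Away from `0` the spectrum of `b` lies in that of `b + 1 - e`, a closed
set missing `0`, so `0` is isolated in `σ(b)`, that is, `μ` is isolated in `σ(a)`.
-/

open Filter Topology

theorem isUnit_add_one_sub_of_mul_eq {R : Type*} [Ring R] {b e x y : R} (heb : e * b = b)
    (hbe : b * e = b) (hxb : x * b = e) (hby : b * y = e) : IsUnit (b + 1 - e) := by
  have he : e * e = e :=
    calc e * e = e * b * y := by rw [mul_assoc, hby]
      _ = e := by rw [heb, hby]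
  have hxy : x * e = e * y :=
    calc x * e = x * b * y := by rw [mul_assoc, hby]
      _ = e * y := by rw [hxb]
  set g := e * y
  have hbg : b * g = e := by rw [← mul_assoc, hbe, hby]
  have hgb : g * b = e := by rw [← hxy, mul_assoc, heb, hxb]
  have heg : e * g = g := by rw [← mul_assoc, he]
  have hge : g * e = g := by rw [← hxy, mul_assoc, he]
  refine ⟨⟨b + 1 - e, g + 1 - e, ?_, ?_⟩, rfl⟩ <;>
  · simp only [mul_add, add_mul, mul_sub, sub_mul, mul_one, one_mul, hbg, hgb, heg, hge, he,
      heb, hbe]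
    abel

theorem spectrum_diff_zero_subset_add_one_sub {K A : Type*} [Field K] [Ring A] [Algebra K A]
    {b e : A} (he : IsIdempotentElem e) (heb : e * b = b) (hbe : b * e = b) :
    spectrum K b \ {0} ⊆ spectrum K (b + 1 - e) := by
  rintro r ⟨hr, hr0 : r ≠ 0⟩ ⟨u, hu⟩
  set a := algebraMap K A r
  have hcomm (z : A) : a * z = z * a := Algebra.commutes r z
  have hue : Commute e u := by
    rw [Commute, SemiconjBy, hu, mul_sub, sub_mul, hcomm]
    simp only [mul_add, add_mul, mul_sub, sub_mul, mul_one, one_mul, heb, hbe, he.eq]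
  have hve : Commute e ↑u⁻¹ := hue.units_inv_right
  have hcorner : (a - b) * e = u * e := by
    rw [hu]; simp only [add_mul, sub_mul, one_mul, hbe, he.eq]; abel
  have hcorner' : e * (a - b) = e * u := by
    rw [hue.eq, ← hcorner, mul_sub, sub_mul, heb, hbe, hcomm]
  have hcompl : (a - b) * (1 - e) = r • (1 - e) := by
    simp only [mul_sub, sub_mul, mul_one, hbe, Algebra.algebraMap_eq_smul_one, smul_mul_assoc,
      one_mul, smul_sub, a]
    abel
  have hcompl' : (1 - e) * (a - b) = r • (1 - e) := by
    simp only [mul_sub, sub_mul, one_mul, heb, Algebra.algebraMap_eq_smul_one, mul_smul_comm,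
      mul_one, smul_sub, a]
    abel
  -- `a - b` acts as `u` on the corner cut out by `e` and as `r` on the one cut out by `1 - e`
  refine hr ⟨⟨a - b, ↑u⁻¹ * e + r⁻¹ • (1 - e), ?_, ?_⟩, rfl⟩
  · rw [mul_add, mul_smul_comm, hcompl, smul_smul, inv_mul_cancel₀ hr0, one_smul, ← hve.eq,
      ← mul_assoc, hcorner, mul_assoc, hve.eq, ← mul_assoc, u.mul_inv, one_mul]
    abel
  · rw [add_mul, smul_mul_assoc, hcompl', smul_smul, inv_mul_cancel₀ hr0, one_smul, mul_assoc,
      hcorner', hue.eq, ← mul_assoc, u.inv_mul, one_mul]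
    abel

theorem not_accPt_of_diff_subset {X : Type*} [TopologicalSpace X] {x : X} {S T : Set X}
    (hT : IsClosed T) (hx : x ∉ T) (hST : S \ {x} ⊆ T) : ¬ AccPt x (𝓟 S) := by
  intro h
  obtain ⟨y, ⟨hyT, hyS⟩, hyx⟩ := accPt_iff_nhds.mp h Tᶜ (hT.isOpen_compl.mem_nhds hx)
  exact hyT (hST ⟨hyS, hyx⟩)

theorem AccPt.zero_spectrum_sub_algebraMap {𝕜 B : Type*} [Field 𝕜] [TopologicalSpace 𝕜]
    [ContinuousSub 𝕜] [Ring B] [Algebra 𝕜 B] {a : B} {μ : 𝕜} (h : AccPt μ (𝓟 (spectrum 𝕜 a))) :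
    AccPt 0 (𝓟 (spectrum 𝕜 (a - algebraMap 𝕜 B μ))) := by
  have := h.map (f := (· - μ)) (by fun_prop) sub_left_injective
  rwa [sub_self, map_principal, ← Set.sub_singleton, spectrum.sub_singleton_eq] at this

theorem TwoSidedIdeal.exists_inverse_mod_sub_algebraMap {K A : Type*} [Field K] [Ring A]
    [Algebra K A] (J : TwoSidedIdeal A) {a : A} (ha : a ∈ J) {μ : K} (hμ : μ ≠ 0) :
    ∃ b : A, (a - algebraMap K A μ) * b - 1 ∈ J ∧ b * (a - algebraMap K A μ) - 1 ∈ J := by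
  have hμμ : algebraMap K A μ * algebraMap K A (-μ⁻¹) = -1 := by
    rw [← map_mul, mul_neg, mul_inv_cancel₀ hμ, map_neg, map_one]
  refine ⟨algebraMap K A (-μ⁻¹), ?_, ?_⟩
  · rw [sub_mul, hμμ, sub_neg_eq_add, add_sub_cancel_right]
    exact J.mul_mem_right _ _ ha
  · rw [mul_sub, ← Algebra.commutes, hμμ, sub_neg_eq_add, add_sub_cancel_right]
    exact J.mul_mem_left _ _ ha

section Banach

variable {𝕜 B : Type*} [NormedField 𝕜] [NormedRing B] [StarRing B] [NormedAlgebra 𝕜 B]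
  [CompleteSpace B]

theorem IsSelfAdjoint.not_accPt_zero_spectrum {b b' : B} (hb : IsSelfAdjoint b)
    (hbb'b : b * b' * b = b) (hbb' : IsSelfAdjoint (b * b')) : ¬ AccPt 0 (𝓟 (spectrum 𝕜 b)) := by
  set e := b * b'
  have heb : e * b = b := hbb'b
  have hbe : b * e = b := by
    simpa only [star_mul, hb.star_eq, hbb'.star_eq] using congr_arg star heb
  have hxb : star b' * b = e := by rw [← hbb'.star_eq, star_mul, hb.star_eq]
  have he : IsIdempotentElem e := by rw [IsIdempotentElem, ← mul_assoc, heb]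
  have hc : IsUnit (b + 1 - e) := isUnit_add_one_sub_of_mul_eq heb hbe hxb rfl
  exact not_accPt_of_diff_subset (spectrum.isClosed _) (fun h ↦ (spectrum.zero_mem_iff 𝕜).mp h hc)
    (spectrum_diff_zero_subset_add_one_sub he heb hbe)

end Banach

theorem moore_penrose_ideal_compact_spectral_general {A : Type*} [CStarAlgebra A]
    (J : TwoSidedIdeal A)
    (hMP : ∀ a : A, (∃ b : A, a * b - 1 ∈ J ∧ b * a - 1 ∈ J) →
      ∃ b : A, a * b * a = a ∧ b * a * b = b ∧
        star (a * b) = a * b ∧ star (b * a) = b * a) :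
    ∀ a ∈ J, IsSelfAdjoint a → ∀ μ : ℂ, μ ≠ 0 →
      ¬ AccPt μ (Filter.principal (spectrum ℂ a)) := by
  intro a haJ hsa μ hμ hacc
  have hμσ : μ ∈ spectrum ℂ a :=
    (spectrum.isClosed a).closure_subset (mem_closure_iff_clusterPt.mpr hacc.clusterPt)
  have hb : IsSelfAdjoint (a - algebraMap ℂ A μ) := by
    rw [hsa.mem_spectrum_eq_re hμσ]
    exact hsa.sub (.algebraMap A (Complex.conj_ofReal _))
  obtain ⟨b', h1, -, h3, -⟩ := hMP _ (J.exists_inverse_mod_sub_algebraMap haJ hμ)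
  exact hb.not_accPt_zero_spectrum h1 h3 hacc.zero_spectrum_sub_algebraMap

/-- Every Moore-Penrose ideal of a unital C*-algebra has the compact spectral
property: if every element invertible modulo the proper closed ideal `J` is
Moore-Penrose invertible, then every self-adjoint element of `J` has `0` as
only possible accumulation point of its spectrum. -/
theorem moore_penrose_ideal_compact_spectral {A : Type*} [CStarAlgebra A]
    (J : TwoSidedIdeal A) (hJc : IsClosed (J : Set A)) (hJp : J ≠ ⊤)
    (hMP : ∀ a : A, (∃ b : A, a * b - 1 ∈ J ∧ b * a - 1 ∈ J) →
      ∃ b : A, a * b * a = a ∧ b * a * b = b ∧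
        star (a * b) = a * b ∧ star (b * a) = b * a) :
    ∀ a ∈ J, IsSelfAdjoint a → ∀ μ : ℂ, μ ≠ 0 →
      ¬ AccPt μ (Filter.principal (spectrum ℂ a)) :=
  moore_penrose_ideal_compact_spectral_general J hMP
end

section
/- For each t in an index set T, let J_t be a Moore-Penrose ideal of a unital C*-algebra A_t. Then the c₀-direct sum ⊕_{t∈T} J_t is a Moore-Penrose ideal of the ℓ∞-direct product Π_{t∈T} A_t. -/
/-! If `b` inverts `a` modulo the c₀-sum, then `‖a t * b t - 1‖` and `‖b t * a t - 1‖` are below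
`1/2` for all but finitely many `t`. At those `t` a Neumann series shows that `a t` is invertible
with `‖(a t)⁻¹‖ ≤ 2 ‖b‖`, and an inverse is a Moore-Penrose inverse; at the finitely many others
`a t` is invertible modulo `J t`, so it has a Moore-Penrose inverse because `J t` is a
Moore-Penrose ideal. The resulting family is bounded, hence lies in `ℓ∞`, where the Moore-Penrose
identities hold coordinatewise. -/

open scoped ENNReal
open Filter

def IsMoorePenroseInverse_s14 {R : Type*} [Mul R] [Star R] (a b : R) : Prop :=
  a * b * a = a ∧ b * a * b = b ∧ star (a * b) = a * b ∧ star (b * a) = b * a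

theorem Units.isMoorePenroseInverse_inv {R : Type*} [Monoid R] [StarMul R] (u : Rˣ) :
    IsMoorePenroseInverse_s14 (u : R) ↑u⁻¹ := by
  simp only [IsMoorePenroseInverse_s14, Units.mul_inv, Units.inv_mul, one_mul, star_one, and_self]

section NormedRing

variable {R : Type*} [NormedRing R] [HasSummableGeomSeries R] [NormOneClass R]

theorem Units.norm_inv_oneSub_le (t : R) (ht : ‖t‖ < 1) :
    ‖(↑(Units.oneSub t ht)⁻¹ : R)‖ ≤ (1 - ‖t‖)⁻¹ :=
  (tsum_geometric_le_of_norm_lt_one t ht).trans_eq (by rw [norm_one, sub_self, zero_add])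

theorem exists_units_norm_inv_le_of_norm_mul_sub_one_lt {x y : R}
    (hxy : ‖x * y - 1‖ < 1 / 2) (hyx : ‖y * x - 1‖ < 1 / 2) :
    ∃ u : Rˣ, (u : R) = x ∧ ‖(↑u⁻¹ : R)‖ ≤ 2 * ‖y‖ := by
  have hxy' : ‖1 - x * y‖ < 1 := by rw [norm_sub_rev]; linarith
  have hyx' : ‖1 - y * x‖ < 1 := by rw [norm_sub_rev]; linarith
  set u := Units.oneSub (1 - x * y) hxy'
  set v := Units.oneSub (1 - y * x) hyx'
  have hu : (u : R) = x * y := sub_sub_cancel 1 (x * y)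
  have hv : (v : R) = y * x := sub_sub_cancel 1 (y * x)
  have hright : x * (y * ↑u⁻¹) = 1 := by rw [← mul_assoc, ← hu, Units.mul_inv]
  have hleft : (↑v⁻¹ * y) * x = 1 := by rw [mul_assoc, ← hv, Units.inv_mul]
  obtain ⟨w, rfl⟩ : IsUnit x := isUnit_iff_exists_and_exists.2 ⟨⟨_, hright⟩, ⟨_, hleft⟩⟩
  refine ⟨w, rfl, ?_⟩
  have hinv : ‖(↑u⁻¹ : R)‖ ≤ 2 := by
    refine (Units.norm_inv_oneSub_le _ hxy').trans ?_
    exact inv_le_of_inv_le₀ (by norm_num) (by rw [norm_sub_rev]; linarith)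
  calc ‖(↑w⁻¹ : R)‖ = ‖y * ↑u⁻¹‖ := by rw [Units.inv_eq_of_mul_eq_one_right hright]
    _ ≤ ‖y‖ * 2 := (norm_mul_le _ _).trans (by gcongr)
    _ = 2 * ‖y‖ := mul_comm _ _

end NormedRing

section lp

variable {T : Type*} {B : T → Type*} [∀ t, NormedRing (B t)] [∀ t, StarRing (B t)]
  [∀ t, NormedStarGroup (B t)]

theorem lp.isMoorePenroseInverse_of_forall {a b : lp B ∞}
    (h : ∀ t, IsMoorePenroseInverse_s14 (a t) (b t)) : IsMoorePenroseInverse_s14 a b := by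
  refine ⟨?_, ?_, ?_, ?_⟩ <;> refine lp.ext (funext fun t ↦ ?_) <;>
    simp only [lp.infty_coeFn_mul, lp.coeFn_star, Pi.mul_apply, Pi.star_apply]
  exacts [(h t).1, (h t).2.1, (h t).2.2.1, (h t).2.2.2]

theorem lp.exists_isMoorePenroseInverse {a : lp B ∞} {M : ℝ}
    (h : ∀ t, ∃ c, IsMoorePenroseInverse_s14 (a t) c)
    (hbdd : ∀ᶠ t in cofinite, ∃ c, IsMoorePenroseInverse_s14 (a t) c ∧ ‖c‖ ≤ M) :
    ∃ c : lp B ∞, IsMoorePenroseInverse_s14 a c := by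
  have hchoice : ∀ t, ∃ c, IsMoorePenroseInverse_s14 (a t) c ∧
      ((∃ c, IsMoorePenroseInverse_s14 (a t) c ∧ ‖c‖ ≤ M) → ‖c‖ ≤ M) := by
    intro t
    by_cases hbdd_t : ∃ c, IsMoorePenroseInverse_s14 (a t) c ∧ ‖c‖ ≤ M
    · obtain ⟨c, hc, hcM⟩ := hbdd_t
      exact ⟨c, hc, fun _ ↦ hcM⟩
    · obtain ⟨c, hc⟩ := h t
      exact ⟨c, hc, fun h' ↦ absurd h' hbdd_t⟩
  choose c hc hcM using hchoice
  have hmem : Memℓp c ∞ :=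
    memℓp_infty (isBoundedUnder_of_eventually_le (hbdd.mono hcM)).bddAbove_range_of_cofinite
  exact ⟨⟨c, hmem⟩, lp.isMoorePenroseInverse_of_forall hc⟩

end lp

theorem directSum_moore_penrose_ideal_general {T : Type*} {A : T → Type*}
    [∀ t, CStarAlgebra (A t)] [∀ t, Nontrivial (A t)]
    (J : ∀ t, TwoSidedIdeal (A t))
    (hMP : ∀ t, ∀ a : A t, (∃ b : A t, a * b - 1 ∈ J t ∧ b * a - 1 ∈ J t) →
      ∃ b : A t, a * b * a = a ∧ b * a * b = b ∧
        star (a * b) = a * b ∧ star (b * a) = b * a)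
    (a : lp (fun t => A t) ∞)
    (ha : ∃ b : lp (fun t => A t) ∞,
      ((∀ t, (a * b - 1) t ∈ J t) ∧
        ∀ ε : ℝ, 0 < ε → {t : T | ε ≤ ‖(a * b - 1) t‖}.Finite) ∧
      ((∀ t, (b * a - 1) t ∈ J t) ∧
        ∀ ε : ℝ, 0 < ε → {t : T | ε ≤ ‖(b * a - 1) t‖}.Finite)) :
    ∃ b : lp (fun t => A t) ∞, a * b * a = a ∧ b * a * b = b ∧
      star (a * b) = a * b ∧ star (b * a) = b * a := by
  obtain ⟨b, ⟨hab, hab_c0⟩, hba, hba_c0⟩ := ha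
  have hcoord (f g : lp (fun t => A t) ∞) (t : T) : (f * g - 1) t = f t * g t - 1 := rfl
  have hsmall : ∀ᶠ t in cofinite, ‖a t * b t - 1‖ < 1 / 2 ∧ ‖b t * a t - 1‖ < 1 / 2 := by
    refine (eventually_cofinite.2 ?_).and (eventually_cofinite.2 ?_)
    · simpa only [not_lt, hcoord] using hab_c0 (1 / 2) (by norm_num)
    · simpa only [not_lt, hcoord] using hba_c0 (1 / 2) (by norm_num)
  refine lp.exists_isMoorePenroseInverse (M := 2 * ‖b‖)
    (fun t ↦ hMP t (a t) ⟨b t, hab t, hba t⟩) ?_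
  filter_upwards [hsmall] with t ⟨hab_t, hba_t⟩
  obtain ⟨u, hu_eq, hu⟩ := exists_units_norm_inv_le_of_norm_mul_sub_one_lt hab_t hba_t
  refine ⟨_, hu_eq ▸ u.isMoorePenroseInverse_inv, hu.trans ?_⟩
  gcongr
  exact lp.norm_apply_le_norm ENNReal.top_ne_zero b t

/-- A direct sum of Moore-Penrose ideals is a Moore-Penrose ideal of the direct
product: if each `J t` is a Moore-Penrose ideal of the unital C*-algebra `A t`,
and `a` in the ℓ∞-product `Π A t` is invertible modulo the c₀-direct sum
`⊕ J t`, then `a` is Moore-Penrose invertible in the product. -/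
theorem directSum_moore_penrose_ideal {T : Type*} {A : T → Type*}
    [∀ t, CStarAlgebra (A t)] [∀ t, Nontrivial (A t)]
    (J : ∀ t, TwoSidedIdeal (A t)) (hclosed : ∀ t, IsClosed (J t : Set (A t)))
    (hMP : ∀ t, ∀ a : A t, (∃ b : A t, a * b - 1 ∈ J t ∧ b * a - 1 ∈ J t) →
      ∃ b : A t, a * b * a = a ∧ b * a * b = b ∧
        star (a * b) = a * b ∧ star (b * a) = b * a)
    (a : lp (fun t => A t) ∞)
    (ha : ∃ b : lp (fun t => A t) ∞,
      ((∀ t, (a * b - 1) t ∈ J t) ∧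
        ∀ ε : ℝ, 0 < ε → {t : T | ε ≤ ‖(a * b - 1) t‖}.Finite) ∧
      ((∀ t, (b * a - 1) t ∈ J t) ∧
        ∀ ε : ℝ, 0 < ε → {t : T | ε ≤ ‖(b * a - 1) t‖}.Finite)) :
    ∃ b : lp (fun t => A t) ∞, a * b * a = a ∧ b * a * b = b ∧
      star (a * b) = a * b ∧ star (b * a) = b * a :=
  directSum_moore_penrose_ideal_general J hMP a ha
end

section
/- Let A be a unital C*-algebra and J a closed ideal that lifts Moore-Penrose invertible elements (whenever a + J is Moore-Penrose invertible in A/J, there is j ∈ J with a + j Moore-Penrose invertible in A). Then J lifts projections: whenever p + J is a projection in A/J, there is a projection q ∈ A with p + J = q + J. -/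
/-!
Modulo `J` the element `p` is its own Moore–Penrose inverse, so some `x = p + j` with `j ∈ J`
has a Moore–Penrose inverse `c` in `A`, and `q = x c` is a projection. A closed ideal of a
C*-algebra is self-adjoint: for `a ∈ J` and `δ > 0` the element `a⋆ (1 - δ (δ + a a⋆)⁻¹)` lies
in `J` and within `√δ / 2` of `a⋆`. Hence `x⋆ ≡ p` as well as `x ≡ p` modulo `J`, and
`p ≡ x⋆ = x⋆ x c ≡ p p c ≡ p c ≡ x c = q`.
-/

lemma mul_mul_div_add_sq_le {δ t : ℝ} (hδ : 0 < δ) (ht : 0 ≤ t) :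
    δ / (δ + t) * t * (δ / (δ + t)) ≤ δ / 4 := by
  rw [div_mul_eq_mul_div, div_mul_div_comm, div_le_div_iff₀ (by positivity) (by norm_num)]
  nlinarith [mul_nonneg hδ.le (sq_nonneg (δ - t))]

section StarClosed

variable {A : Type*} [CStarAlgebra A]

lemma norm_mul_cfc_div_add_star_mul_self_sq_le (x : A) {δ : ℝ} (hδ : 0 < δ) :
    ‖x * cfc (fun t : ℝ => δ / (δ + t)) (star x * x)‖ ^ 2 ≤ δ / 4 := by
  have hspec := spectrum_star_mul_self_nonneg (b := x)
  have hcont : ContinuousOn (fun t : ℝ => δ / (δ + t)) (spectrum ℝ (star x * x)) :=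
    continuousOn_const.div (continuousOn_const.add continuousOn_id) fun t ht => by
      have := hspec t ht; positivity
  have hv : IsSelfAdjoint (cfc (fun t : ℝ => δ / (δ + t)) (star x * x)) := cfc_predicate _ _
  have hvbv : cfc (fun t : ℝ => δ / (δ + t)) (star x * x) * (star x * x) *
      cfc (fun t : ℝ => δ / (δ + t)) (star x * x) =
      cfc (fun t : ℝ => δ / (δ + t) * t * (δ / (δ + t))) (star x * x) := by
    rw [cfc_mul (fun t : ℝ => δ / (δ + t) * t) _ _ (hcont.mul (continuousOn_id' _)) hcont,
      cfc_mul _ _ _ hcont (continuousOn_id' _), cfc_id' ℝ (star x * x)]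
  rw [sq, ← CStarRing.norm_star_mul_self, star_mul, hv.star_eq, ← mul_assoc,
    mul_assoc _ (star x), hvbv]
  refine norm_cfc_le (by positivity) fun t ht => ?_
  have ht0 := hspec t ht
  rw [Real.norm_of_nonneg (by positivity)]
  exact mul_mul_div_add_sq_le hδ ht0

lemma TwoSidedIdeal.one_sub_cfc_div_add_mem (J : TwoSidedIdeal A) {b : A} (hbJ : b ∈ J)
    (hb : IsSelfAdjoint b) (hspec : ∀ t ∈ spectrum ℝ b, 0 ≤ t) {δ : ℝ} (hδ : 0 < δ) :
    1 - cfc (fun t : ℝ => δ / (δ + t)) b ∈ J := by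
  have hne : ∀ t ∈ spectrum ℝ b, δ + t ≠ 0 := fun t ht => by
    have := hspec t ht; positivity
  have hcont : ContinuousOn (fun t : ℝ => δ / (δ + t)) (spectrum ℝ b) :=
    continuousOn_const.div (continuousOn_const.add continuousOn_id) hne
  have hinv : ContinuousOn (fun t : ℝ => (δ + t)⁻¹) (spectrum ℝ b) :=
    (continuousOn_const.add continuousOn_id).inv₀ hne
  have heq : 1 - cfc (fun t : ℝ => δ / (δ + t)) b = b * cfc (fun t : ℝ => (δ + t)⁻¹) b :=
    calc 1 - cfc (fun t : ℝ => δ / (δ + t)) b = cfc (fun t : ℝ => 1 - δ / (δ + t)) b := by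
          rw [cfc_sub _ _ b continuousOn_const hcont, cfc_const_one ℝ b]
      _ = cfc (fun t : ℝ => t * (δ + t)⁻¹) b := cfc_congr fun t ht => by
          field_simp [hne t ht]; ring
      _ = b * cfc (fun t : ℝ => (δ + t)⁻¹) b := by
          rw [cfc_mul _ _ b (continuousOn_id' _) hinv, cfc_id' ℝ b]
  rw [heq]
  exact J.mul_mem_right _ _ hbJ

theorem TwoSidedIdeal.star_mem_of_isClosed (J : TwoSidedIdeal A) (hJ : IsClosed (J : Set A))
    {a : A} (ha : a ∈ J) : star a ∈ J := by
  rw [← SetLike.mem_coe, ← hJ.closure_eq, Metric.mem_closure_iff]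
  intro ε hε
  have hbJ : star (star a) * star a ∈ J := by rw [star_star]; exact J.mul_mem_right _ _ ha
  set v := cfc (fun t : ℝ => ε ^ 2 / (ε ^ 2 + t)) (star (star a) * star a)
  refine ⟨star a * (1 - v), J.mul_mem_left _ _ <| J.one_sub_cfc_div_add_mem hbJ
    (.star_mul_self _) spectrum_star_mul_self_nonneg (by positivity), ?_⟩
  have hsq := norm_mul_cfc_div_add_star_mul_self_sq_le (star a) (pow_pos hε 2)
  rw [dist_eq_norm, mul_sub, mul_one, sub_sub_cancel]
  nlinarith [norm_nonneg (star a * v)]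

end StarClosed

namespace TwoSidedIdeal

variable {R : Type*} [Ring R] (J : TwoSidedIdeal R)

lemma ringCon_mk'_eq_iff {x y : R} : J.ringCon.mk' x = J.ringCon.mk' y ↔ x - y ∈ J :=
  J.ringCon.eq.trans (J.rel_iff x y)

lemma mul_mul_self_sub_mem {p : R} (hidem : p * p - p ∈ J) : p * p * p - p ∈ J := by
  rw [← ringCon_mk'_eq_iff] at hidem ⊢
  rw [map_mul, hidem, ← map_mul, hidem]

variable [StarRing R]

lemma star_mul_self_sub_mul_self_mem {p : R} (hsa : star p - p ∈ J) :
    star (p * p) - p * p ∈ J := by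
  rw [← ringCon_mk'_eq_iff] at hsa ⊢
  rw [star_mul, map_mul, map_mul, hsa]

lemma sub_mul_mem_of_mul_mul_eq {p x c : R} (hx : x - p ∈ J) (hxs : star x - p ∈ J)
    (hp : p * p - p ∈ J) (hxcx : x * c * x = x) (hxc : IsSelfAdjoint (x * c)) :
    p - x * c ∈ J := by
  have hstar : star x = star x * (x * c) := by
    conv_lhs => rw [← hxcx, star_mul, hxc.star_eq]
  rw [← ringCon_mk'_eq_iff] at hx hxs hp ⊢
  rw [map_mul] at hp
  calc J.ringCon.mk' p = J.ringCon.mk' (star x * (x * c)) := by rw [← hstar, hxs]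
    _ = J.ringCon.mk' (x * c) := by simp only [map_mul, hx, hxs, ← mul_assoc, hp]

end TwoSidedIdeal

lemma isStarProjection_mul_of_mul_mul_eq {R : Type*} [Semigroup R] [Star R] {x c : R} (hxcx : x * c * x = x)
    (hxc : IsSelfAdjoint (x * c)) : IsStarProjection (x * c) := by
  refine ⟨?_, hxc⟩
  rw [IsIdempotentElem, ← mul_assoc, hxcx]

/-- If a closed ideal `J` of a unital C*-algebra lifts Moore-Penrose invertible
elements, then `J` lifts projections. -/
theorem lifts_moore_penrose_imp_lifts_projections {A : Type*} [CStarAlgebra A]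
    (J : TwoSidedIdeal A) (hJc : IsClosed (J : Set A))
    (hlift : ∀ a : A,
      (∃ b : A, a * b * a - a ∈ J ∧ b * a * b - b ∈ J ∧
        star (a * b) - a * b ∈ J ∧ star (b * a) - b * a ∈ J) →
      ∃ j ∈ J, ∃ c : A, (a + j) * c * (a + j) = a + j ∧ c * (a + j) * c = c ∧
        star ((a + j) * c) = (a + j) * c ∧ star (c * (a + j)) = c * (a + j))
    (p : A) (hsa : star p - p ∈ J) (hidem : p * p - p ∈ J) :
    ∃ q : A, (star q = q ∧ q * q = q) ∧ p - q ∈ J := by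
  have hcube := J.mul_mul_self_sub_mem hidem
  have hsq := J.star_mul_self_sub_mul_self_mem hsa
  obtain ⟨j, hj, c, hxcx, -, hxc, -⟩ := hlift p ⟨p, hcube, hcube, hsq, hsq⟩
  have hx : p + j - p ∈ J := by rwa [add_sub_cancel_left]
  have hxs : star (p + j) - p ∈ J := by
    rw [star_add, add_sub_right_comm]
    exact J.add_mem hsa (J.star_mem_of_isClosed hJc hj)
  obtain ⟨hqq, hqs⟩ := isStarProjection_mul_of_mul_mul_eq hxcx hxc
  exact ⟨(p + j) * c, ⟨hqs, hqq⟩, J.sub_mul_mem_of_mul_mul_eq hx hxs hidem hxcx hxc⟩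
end

section
/- Let J be the ideal {f ∈ C([0,1]) : f(0) = f(1) = 0} of C([0,1]), and let a ∈ C([0,1]) with a(0) = 0 and a(1) = 1. Then a + J is a projection in C([0,1])/J (in particular Moore-Penrose invertible), but the coset a + J contains neither a Moore-Penrose invertible function nor a projection of C([0,1]). -/
/-!
If `f * g * f = f` in `C(X, R)`, then `f * g` is idempotent, hence takes only the values `0` and
`1`; on a connected space it is therefore constant, and since `f = (f * g) * f`, the function `f`
vanishes either everywhere or nowhere. A lift of `a + J` vanishes at `0` but not at `1`, so it
cannot be Moore-Penrose invertible; a projection `q` is its own Moore-Penrose inverse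
(`q * q * q = q`), so no lift is a projection either.
-/

variable {X R : Type*} [TopologicalSpace X] [PreconnectedSpace X]
  [Ring R] [NoZeroDivisors R] [TopologicalSpace R] [IsTopologicalRing R] [T1Space R]

theorem IsIdempotentElem.continuousMap_apply_eq {e : C(X, R)} (he : IsIdempotentElem e)
    (x y : X) : e x = e y := by
  have hvalues : Set.MapsTo e Set.univ {0, 1} := fun t _ ↦
    IsIdempotentElem.iff_eq_zero_or_one.mp congr($he t)
  exact isPreconnected_univ.constant_of_mapsTo (Set.toFinite _).isDiscrete
    e.continuous.continuousOn hvalues trivial trivial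

theorem ContinuousMap.apply_eq_zero_of_mul_mul_eq_self {f g : C(X, R)} (hfgf : f * g * f = f) {x : X}
    (hx : f x = 0) (y : X) : f y = 0 := by
  have hidem : IsIdempotentElem (f * g) := by
    rw [IsIdempotentElem, ← mul_assoc, hfgf]
  calc f y = (f * g) y * f y := by simpa using congr($hfgf.symm y)
    _ = (f * g) x * f y := by rw [hidem.continuousMap_apply_eq x y]
    _ = 0 := by simp [hx]

/-- Let `J = {f ∈ C([0,1]) : f 0 = f 1 = 0}` and `a ∈ C([0,1])` with `a 0 = 0`,
`a 1 = 1`. Then `a + J` is a projection (hence Moore-Penrose invertible) in the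
quotient, but `a + J` contains neither a Moore-Penrose invertible function nor
a projection. -/
theorem projection_coset_without_lift
    (a : C(unitInterval, ℂ)) (h0 : a 0 = 0) (h1 : a 1 = 1) :
    ((star a - a) 0 = 0 ∧ (star a - a) 1 = 0) ∧
    ((a * a - a) 0 = 0 ∧ (a * a - a) 1 = 0) ∧
    (∃ b : C(unitInterval, ℂ),
      ((a * b * a - a) 0 = 0 ∧ (a * b * a - a) 1 = 0) ∧
      ((b * a * b - b) 0 = 0 ∧ (b * a * b - b) 1 = 0) ∧
      ((star (a * b) - a * b) 0 = 0 ∧ (star (a * b) - a * b) 1 = 0) ∧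
      ((star (b * a) - b * a) 0 = 0 ∧ (star (b * a) - b * a) 1 = 0)) ∧
    (¬ ∃ f : C(unitInterval, ℂ), ((a - f) 0 = 0 ∧ (a - f) 1 = 0) ∧
      ∃ g : C(unitInterval, ℂ), f * g * f = f ∧ g * f * g = g ∧
        star (f * g) = f * g ∧ star (g * f) = g * f) ∧
    (¬ ∃ q : C(unitInterval, ℂ), (star q = q ∧ q * q = q) ∧
      ((a - q) 0 = 0 ∧ (a - q) 1 = 0)) := by
  have no_regular_lift : ∀ f g : C(unitInterval, ℂ), (a - f) 0 = 0 → (a - f) 1 = 0 →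
      f * g * f ≠ f := by
    intro f g hf0 hf1 hfgf
    rw [ContinuousMap.sub_apply, sub_eq_zero] at hf0 hf1
    have := ContinuousMap.apply_eq_zero_of_mul_mul_eq_self hfgf (x := 0) (by rw [← hf0, h0]) 1
    simp [← hf1, h1] at this
  refine ⟨by simp [h0, h1], by simp [h0, h1], ⟨a, by simp [h0, h1]⟩, ?_, ?_⟩
  · rintro ⟨f, ⟨hf0, hf1⟩, g, hfgf, -⟩
    exact no_regular_lift f g hf0 hf1 hfgf
  · rintro ⟨q, ⟨-, hidem⟩, hq0, hq1⟩
    exact no_regular_lift q q hq0 hq1 (by rw [hidem, hidem])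
end

section
/- Let A = C(D̄) where D̄ is the closed unit disk, and J = {f ∈ C(D̄) : f vanishes on the unit circle T}. Then the coset of the function a(z) = z is invertible in A/J, but there is no Moore-Penrose invertible function ã ∈ C(D̄) with a − ã ∈ J. Hence J does not lift Moore-Penrose invertible elements. -/
/-!
If `f ≡ z` modulo `J` had a Moore–Penrose inverse `g`, then `f g` would be a continuous idempotent
on the connected disk, hence `0` or `1`: either `f = 0`, impossible on the circle, or `f` never
vanishes. A nonvanishing function on the simply connected disk has a continuous logarithm (lift
through the covering `exp : ℂ → ℂ \ {0}`), and restricting it to the circle gives a continuous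
logarithm `F` of `z` there. But then `t ↦ F (e^{it})` and `t ↦ F 1 + i t` both lift `t ↦ e^{it}`
from `F 1`, so they coincide, and `t = 2π` gives `2πi = 0`.
-/

open Complex Metric

theorem ContinuousMap.eq_zero_or_eq_one_of_isIdempotentElem {X K : Type*} [TopologicalSpace X]
    [PreconnectedSpace X] [Field K] [TopologicalSpace K] [T1Space K] [ContinuousMul K]
    {p : C(X, K)} (hp : IsIdempotentElem p) : p = 0 ∨ p = 1 := by
  have hvalues : Set.MapsTo p Set.univ {0, 1} := fun x _ =>
    IsIdempotentElem.iff_eq_zero_or_one.1 congr($hp x)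
  obtain ⟨c, hc, hpc⟩ := isPreconnected_univ.eqOn_const_of_mapsTo (Set.toFinite _).isDiscrete
    p.continuous.continuousOn hvalues (Set.insert_nonempty 0 {1})
  rcases hc with rfl | rfl
  · exact .inl (ext fun x => hpc (Set.mem_univ x))
  · exact .inr (ext fun x => hpc (Set.mem_univ x))

theorem ContinuousMap.eq_zero_or_forall_ne_zero_of_mul_mul_eq {X K : Type*}
    [TopologicalSpace X] [PreconnectedSpace X] [Field K] [TopologicalSpace K] [T1Space K]
    [ContinuousMul K] {f g : C(X, K)} (h : f * g * f = f) : f = 0 ∨ ∀ x, f x ≠ 0 := by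
  have hidem : IsIdempotentElem (f * g) := by
    rw [IsIdempotentElem, ← mul_assoc, h]
  rcases eq_zero_or_eq_one_of_isIdempotentElem hidem with hfg | hfg
  · exact .inl (by rw [← h, hfg, zero_mul])
  · exact .inr fun x => left_ne_zero_of_mul_eq_one congr($hfg x)

theorem ContinuousMap.exists_exp_eq_of_ne_zero {X : Type*} [TopologicalSpace X]
    [SimplyConnectedSpace X] [LocallyPathConnectedSpace X] (f : C(X, ℂ)) (hf : ∀ x, f x ≠ 0) :
    ∃ F : C(X, ℂ), ∀ x, cexp (F x) = f x := by
  obtain ⟨x₀⟩ := (inferInstance : Nonempty X)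
  obtain ⟨F, ⟨-, hF⟩, -⟩ := isCoveringMapOn_exp.existsUnique_continuousMap_lifts f
    (a₀ := x₀) (exp_log (hf x₀)) hf
  exact ⟨F, congr_fun hF⟩

theorem Circle.not_forall_exp_eq_coe (F : C(Circle, ℂ)) : ¬ ∀ z : Circle, cexp (F z) = z := by
  intro hF
  obtain ⟨_, -, hunique⟩ := isCoveringMapOn_exp.existsUnique_continuousMap_lifts
    ⟨fun t : ℝ => cexp (t * I), by fun_prop⟩ (a₀ := 0) (e₀ := F 1)
    (by simpa using hF 1) (fun t => exp_ne_zero _)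
  have hlifts : F.comp Circle.exp = ⟨fun t => F 1 + t * I, by fun_prop⟩ := by
    refine (hunique _ ⟨by simp, ?_⟩).trans (hunique _ ⟨by simp, ?_⟩).symm
    · ext t; simp [hF]
    · ext t
      simp only [Function.comp_apply, ContinuousMap.coe_mk, Complex.exp_add, hF 1, Circle.coe_one,
        one_mul]
  have := congr($hlifts (2 * Real.pi))
  simp [Real.pi_ne_zero, I_ne_zero] at this

theorem exists_eq_zero_of_apply_eq_self_of_norm_eq_one (f : C(closedBall (0 : ℂ) 1, ℂ))
    (hf : ∀ z : closedBall (0 : ℂ) 1, ‖(z : ℂ)‖ = 1 → f z = z) : ∃ z, f z = 0 := by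
  by_contra! hne
  have := (convex_closedBall (0 : ℂ) 1).contractibleSpace (nonempty_closedBall.2 zero_le_one)
  have := (convex_closedBall (0 : ℂ) 1).locallyPathConnectedSpace
  obtain ⟨F, hF⟩ := f.exists_exp_eq_of_ne_zero hne
  let ι : C(Circle, closedBall (0 : ℂ) 1) :=
    ⟨fun z => ⟨z, by simp [Circle.norm_coe]⟩, by fun_prop⟩
  exact Circle.not_forall_exp_eq_coe (F.comp ι) fun z => (hF _).trans (hf _ z.norm_coe)

/-- Let `A = C(D̄)` with `D̄` the closed unit disk and
`J = {f ∈ C(D̄) : f` vanishes on the unit circle `}`. The coset of `a(z) = z` is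
invertible in `A/J`, but no Moore-Penrose invertible function agrees with `a`
modulo `J`; hence `J` does not lift Moore-Penrose invertible elements. -/
theorem disk_ideal_does_not_lift_moore_penrose
    (a : C((Metric.closedBall (0 : ℂ) 1 : Set ℂ), ℂ))
    (ha : ∀ z : (Metric.closedBall (0 : ℂ) 1 : Set ℂ), a z = (z : ℂ)) :
    (∃ b : C((Metric.closedBall (0 : ℂ) 1 : Set ℂ), ℂ),
      (∀ z : (Metric.closedBall (0 : ℂ) 1 : Set ℂ), ‖(z : ℂ)‖ = 1 → (a * b - 1) z = 0) ∧
      (∀ z : (Metric.closedBall (0 : ℂ) 1 : Set ℂ), ‖(z : ℂ)‖ = 1 → (b * a - 1) z = 0)) ∧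
    ¬ ∃ f : C((Metric.closedBall (0 : ℂ) 1 : Set ℂ), ℂ),
      (∀ z : (Metric.closedBall (0 : ℂ) 1 : Set ℂ), ‖(z : ℂ)‖ = 1 → (a - f) z = 0) ∧
      ∃ g : C((Metric.closedBall (0 : ℂ) 1 : Set ℂ), ℂ),
        f * g * f = f ∧ g * f * g = g ∧ star (f * g) = f * g ∧ star (g * f) = g * f := by
  refine ⟨⟨star a, fun z hz => ?_, fun z hz => ?_⟩, ?_⟩
  · simp [ha, mul_conj', hz]
  · simp [ha, conj_mul', hz]
  · rintro ⟨f, hfa, g, hfgf, -⟩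
    have hf : ∀ z : (Metric.closedBall (0 : ℂ) 1 : Set ℂ), ‖(z : ℂ)‖ = 1 → f z = z :=
      fun z hz => ha z ▸ (sub_eq_zero.1 (hfa z hz)).symm
    have := Subtype.preconnectedSpace (convex_closedBall (0 : ℂ) 1).isPreconnected
    obtain ⟨z, hz⟩ := exists_eq_zero_of_apply_eq_self_of_norm_eq_one f hf
    rcases f.eq_zero_or_forall_ne_zero_of_mul_mul_eq hfgf with rfl | hne
    · simpa using hf ⟨1, by simp⟩ (by simp)
    · exact hne z hz
end
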